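/- arXiv:2109.13585 — 8 statements merged into one kernel-verified Lean document; each statement's English description precedes it below -/
import Mathlib

section
/- For any two permutations σ, τ ∈ S_n, the Hamming distance decreases by at most 3 after contraction: hd(σ,τ) − hd(σ^CT, τ^CT) ≤ 3. -/
/-- Hamming distance between two permutations of `Fin n`. -/
def hd {n : ℕ} (σ τ : Equiv.Perm (Fin n)) : ℕ :=
  (Finset.univ.filter fun x => σ x ≠ τ x).card

/-- Contraction of a permutation: delete the symbol `n` (the largest one)
from the cycle decomposition of `σ`. -/
def contract {n : ℕ} (σ : Equiv.Perm (Fin (n + 1))) : Equiv.Perm (Fin n) :=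
  Equiv.removeNone (finSuccEquivLast.permCongr σ)

/-- Extension of a permutation of `Fin n` to a permutation of `Fin (n+1)`
fixing the last symbol. -/
def extendPerm {n : ℕ} (π : Equiv.Perm (Fin n)) : Equiv.Perm (Fin (n + 1)) :=
  finSuccEquivLast.permCongr.symm (Equiv.optionCongr π)

/-- `m`-fold iterated contraction. -/
def contractIter : ∀ (m : ℕ) {n : ℕ}, Equiv.Perm (Fin (n + m)) → Equiv.Perm (Fin n)
  | 0, _, σ => σ
  | m + 1, _, σ => contractIter m (contract σ)

/-- Hamming distance of a permutation array: the minimum Hamming distance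
between distinct elements. -/
noncomputable def hdP {n : ℕ} (P : Set (Equiv.Perm (Fin n))) : ℕ :=
  sInf {d | ∃ σ ∈ P, ∃ τ ∈ P, σ ≠ τ ∧ hd σ τ = d}

lemma contract_castSucc {n : ℕ} (σ : Equiv.Perm (Fin (n + 1))) (y : Fin n)
    (h : σ y.castSucc ≠ Fin.last n) :
    (contract σ y).castSucc = σ y.castSucc := by
  obtain ⟨z, hz⟩ := Fin.exists_castSucc_eq.mpr h
  have he : (finSuccEquivLast.permCongr σ) (some y) = some z := by
    rw [Equiv.permCongr_apply]; simp [← hz]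
  have := Equiv.removeNone_some (finSuccEquivLast.permCongr σ) ⟨z, he⟩
  rw [he] at this
  simp only [contract]
  rw [Option.some_inj.mp this, hz]

theorem hd_sub_hd_contract_le_three (n : ℕ) (σ τ : Equiv.Perm (Fin (n + 1))) :
    (hd σ τ : ℤ) - (hd (contract σ) (contract τ) : ℤ) ≤ 3 := by
  have key : hd σ τ ≤ hd (contract σ) (contract τ) + 3 := by
    unfold hd
    set S := Finset.univ.filter fun x => σ x ≠ τ x with hS
    set T := Finset.univ.filter fun x => contract σ x ≠ contract τ x with hT
    have hsub : S ⊆ T.map Fin.castSuccEmb ∪ {Fin.last n, σ⁻¹ (Fin.last n), τ⁻¹ (Fin.last n)} := by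
      intro x hx
      by_cases h1 : x = Fin.last n
      · exact Finset.mem_union_right _ (by simp [h1])
      by_cases h2 : σ x = Fin.last n
      · refine Finset.mem_union_right _ ?_
        simp [show x = σ⁻¹ (Fin.last n) from by rw [← h2]; simp]
      by_cases h3 : τ x = Fin.last n
      · refine Finset.mem_union_right _ ?_
        simp [show x = τ⁻¹ (Fin.last n) from by rw [← h3]; simp]
      refine Finset.mem_union_left _ ?_
      obtain ⟨y, rfl⟩ := Fin.exists_castSucc_eq.mpr h1
      rw [Finset.mem_map]
      refine ⟨y, ?_, rfl⟩
      simp only [hT, Finset.mem_filter, Finset.mem_univ, true_and]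
      intro hc
      have h4 := contract_castSucc σ y h2
      have h5 := contract_castSucc τ y h3
      rw [hc, h5] at h4
      have hne : σ y.castSucc ≠ τ y.castSucc := by
        have := Finset.mem_filter.mp (hS ▸ hx)
        exact this.2
      exact hne h4.symm
    calc S.card ≤ (T.map Fin.castSuccEmb ∪ {Fin.last n, σ⁻¹ (Fin.last n), τ⁻¹ (Fin.last n)}).card :=
          Finset.card_le_card hsub
      _ ≤ (T.map Fin.castSuccEmb).card + ({Fin.last n, σ⁻¹ (Fin.last n), τ⁻¹ (Fin.last n)} : Finset _).card :=
          Finset.card_union_le _ _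
      _ ≤ T.card + 3 := by
          rw [Finset.card_map]
          gcongr
          have := Finset.card_insert_le (Fin.last n) ({σ⁻¹ (Fin.last n), τ⁻¹ (Fin.last n)} : Finset _)
          have := Finset.card_insert_le (σ⁻¹ (Fin.last n)) ({τ⁻¹ (Fin.last n)} : Finset _)
          simp only [Finset.card_singleton] at *
          omega
  omega
end

section
/- For σ, τ ∈ S_n, the equation hd(σ,τ) − hd(σ^CT, τ^CT) = 3 holds if and only if the 3-cycle ρ = (n-1, σ(n-1), τ(n-1)) is a factor in the disjoint cycle decomposition of σ⁻¹τ. -/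
lemma contract_castSucc_s2 {n : ℕ} (σ : Equiv.Perm (Fin (n+1))) (x : Fin n) :
    Fin.castSucc (contract σ x) =
      if σ (Fin.castSucc x) = Fin.last n then σ (Fin.last n) else σ (Fin.castSucc x) := by
  set e := finSuccEquivLast.permCongr σ with he
  have hes : ∀ y : Fin (n+1), finSuccEquivLast.symm (finSuccEquivLast y) = y := fun y =>
    finSuccEquivLast.symm_apply_apply y
  by_cases h : σ (Fin.castSucc x) = Fin.last n
  · rw [if_pos h]
    have hL : σ (Fin.last n) ≠ Fin.last n := by
      intro hc
      have := σ.injective (h.trans hc.symm)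
      exact absurd this (Fin.castSucc_lt_last x).ne
    have hnone : e (some x) = none := by
      simp [he, Equiv.permCongr_apply, h]
    have h2 := Equiv.removeNone_none e hnone
    have : e none = finSuccEquivLast (σ (Fin.last n)) := by
      simp [he, Equiv.permCongr_apply]
    rw [this] at h2
    have := congrArg finSuccEquivLast.symm h2
    rw [hes] at this
    rw [← this]
    rw [finSuccEquivLast_symm_some]; rfl
  · rw [if_neg h]
    have hsome : ∃ y, e (some x) = some y := by
      refine ⟨(σ (Fin.castSucc x)).castPred h, ?_⟩
      simp [he, Equiv.permCongr_apply]
      conv_lhs => rw [← Fin.castSucc_castPred _ h]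
      exact finSuccEquivLast_castSucc _
    have h2 := Equiv.removeNone_some e hsome
    have : e (some x) = finSuccEquivLast (σ (Fin.castSucc x)) := by
      simp [he, Equiv.permCongr_apply]
    rw [this] at h2
    have := congrArg finSuccEquivLast.symm h2
    rw [hes] at this
    rw [← this]
    rw [finSuccEquivLast_symm_some]; rfl

lemma hd_int {n : ℕ} (σ τ : Equiv.Perm (Fin n)) :
    (hd σ τ : ℤ) = ∑ x : Fin n, (if σ x = τ x then (0:ℤ) else 1) := by
  unfold hd
  rw [Finset.card_filter]
  push_cast
  refine Finset.sum_congr rfl fun x _ => ?_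
  by_cases h : σ x = τ x <;> simp [h]

theorem hd_sub_hd_contract_eq_three_iff (n : ℕ) (σ τ : Equiv.Perm (Fin (n + 1))) :
    (hd σ τ : ℤ) - (hd (contract σ) (contract τ) : ℤ) = 3 ↔
      (Fin.last n ≠ σ (Fin.last n) ∧ Fin.last n ≠ τ (Fin.last n) ∧
        σ (Fin.last n) ≠ τ (Fin.last n) ∧
        (τ * σ⁻¹) (Fin.last n) = σ (Fin.last n) ∧
        (τ * σ⁻¹) (σ (Fin.last n)) = τ (Fin.last n) ∧
        (τ * σ⁻¹) (τ (Fin.last n)) = Fin.last n) := by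
  classical
  set L := Fin.last n with hLdef
  set t : Fin n → ℤ := fun x =>
    (if σ x.castSucc = τ x.castSucc then (0:ℤ) else 1) -
      (if contract σ x = contract τ x then (0:ℤ) else 1) with ht
  have hdiff : (hd σ τ : ℤ) - (hd (contract σ) (contract τ) : ℤ) =
      (if σ L = τ L then (0:ℤ) else 1) + ∑ x : Fin n, t x := by
    rw [hd_int, hd_int, Fin.sum_univ_castSucc, ht, Finset.sum_sub_distrib]
    ring
  have hcon : ∀ x : Fin n, (contract σ x = contract τ x) ↔
      ((if σ x.castSucc = L then σ L else σ x.castSucc) =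
       (if τ x.castSucc = L then τ L else τ x.castSucc)) := fun x => by
    rw [← Fin.castSucc_inj, contract_castSucc_s2, contract_castSucc_s2]
  have ht0 : ∀ x : Fin n, σ x.castSucc ≠ L → τ x.castSucc ≠ L → t x = 0 := by
    intro x h1 h2
    have hc := hcon x
    rw [if_neg h1, if_neg h2] at hc
    simp only [ht]
    by_cases h : σ x.castSucc = τ x.castSucc
    · rw [if_pos h, if_pos (hc.mpr h)]; ring
    · rw [if_neg h, if_neg (fun hh => h (hc.mp hh))]; ring
  have hmemσ : ∀ x : Fin n, σ x.castSucc = L ↔ x.castSucc = σ⁻¹ L := fun x =>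
    ⟨fun h => by rw [← h]; simp, fun h => by rw [h]; simp⟩
  have hmemτ : ∀ x : Fin n, τ x.castSucc = L ↔ x.castSucc = τ⁻¹ L := fun x =>
    ⟨fun h => by rw [← h]; simp, fun h => by rw [h]; simp⟩
  have hcsl : ∀ x : Fin n, x.castSucc ≠ L := fun x => (Fin.castSucc_lt_last x).ne
  rw [hdiff]
  by_cases ha : σ L = L
  · -- last n = σ (last n): RHS false, LHS false
    have hp : σ⁻¹ L = L := σ.injective (by simp [ha])
    constructor
    · intro h
      exfalso
      by_cases hb : τ L = L
      · have hq : τ⁻¹ L = L := τ.injective (by simp [hb])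
        have hz : ∑ x : Fin n, t x = 0 := Finset.sum_eq_zero fun x _ =>
          ht0 x (fun hx => hcsl x (((hmemσ x).mp hx).trans hp))
            (fun hx => hcsl x (((hmemτ x).mp hx).trans hq))
        rw [hz] at h
        split_ifs at h <;> omega
      · have hqL : τ⁻¹ L ≠ L := fun hc => hb (by conv_lhs => rw [← hc]; simp)
        set q' : Fin n := (τ⁻¹ L).castPred hqL with hq'
        have hq'c : q'.castSucc = τ⁻¹ L := Fin.castSucc_castPred _ _
        have hsub : ∑ x ∈ ({q'} : Finset (Fin n)), t x = ∑ x : Fin n, t x := by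
          refine Finset.sum_subset (Finset.subset_univ _) fun x _ hx => ?_
          rw [Finset.mem_singleton] at hx
          refine ht0 x (fun hh => hcsl x (((hmemσ x).mp hh).trans hp)) (fun hh => ?_)
          exact hx (Fin.castSucc_injective n (((hmemτ x).mp hh).trans hq'c.symm))
        rw [← hsub, Finset.sum_singleton] at h
        have hτq : τ q'.castSucc = L := by rw [hq'c]; simp
        have hσq : σ q'.castSucc ≠ L := fun hh => hcsl q' (((hmemσ q').mp hh).trans hp)
        have hc := hcon q'
        rw [if_neg hσq, if_pos hτq] at hc
        have hne : σ q'.castSucc ≠ τ q'.castSucc := fun hh => hσq (hh.trans hτq)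
        simp only [ht, if_neg hne] at h
        by_cases hcb : σ q'.castSucc = τ L
        · rw [if_pos (hc.mpr hcb)] at h; split_ifs at h <;> omega
        · rw [if_neg (fun hh => hcb (hc.mp hh))] at h; split_ifs at h <;> omega
    · rintro ⟨h1, -⟩
      exact (h1 ha.symm).elim
  · by_cases hb : τ L = L
    · -- last n = τ (last n): RHS false, LHS false
      have hq : τ⁻¹ L = L := τ.injective (by simp [hb])
      constructor
      · intro h
        exfalso
        have hpL : σ⁻¹ L ≠ L := fun hc => ha (by conv_lhs => rw [← hc]; simp)
        set p' : Fin n := (σ⁻¹ L).castPred hpL with hp'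
        have hp'c : p'.castSucc = σ⁻¹ L := Fin.castSucc_castPred _ _
        have hsub : ∑ x ∈ ({p'} : Finset (Fin n)), t x = ∑ x : Fin n, t x := by
          refine Finset.sum_subset (Finset.subset_univ _) fun x _ hx => ?_
          rw [Finset.mem_singleton] at hx
          refine ht0 x (fun hh => ?_) (fun hh => hcsl x (((hmemτ x).mp hh).trans hq))
          exact hx (Fin.castSucc_injective n (((hmemσ x).mp hh).trans hp'c.symm))
        rw [← hsub, Finset.sum_singleton] at h
        have hσp : σ p'.castSucc = L := by rw [hp'c]; simp
        have hτp : τ p'.castSucc ≠ L := fun hh => hcsl p' (((hmemτ p').mp hh).trans hq)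
        have hc := hcon p'
        rw [if_pos hσp, if_neg hτp] at hc
        have hne : σ p'.castSucc ≠ τ p'.castSucc := fun hh => hτp (hh.symm.trans hσp)
        simp only [ht, if_neg hne] at h
        by_cases hcb : σ L = τ p'.castSucc
        · rw [if_pos (hc.mpr hcb)] at h; split_ifs at h <;> omega
        · rw [if_neg (fun hh => hcb (hc.mp hh))] at h; split_ifs at h <;> omega
      · rintro ⟨-, h2, -⟩
        exact (h2 hb.symm).elim
    · -- a ≠ L, b ≠ L
      have hpL : σ⁻¹ L ≠ L := fun hc => ha (by conv_lhs => rw [← hc]; simp)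
      have hqL : τ⁻¹ L ≠ L := fun hc => hb (by conv_lhs => rw [← hc]; simp)
      set p' : Fin n := (σ⁻¹ L).castPred hpL with hp'
      set q' : Fin n := (τ⁻¹ L).castPred hqL with hq'
      have hp'c : p'.castSucc = σ⁻¹ L := Fin.castSucc_castPred _ _
      have hq'c : q'.castSucc = τ⁻¹ L := Fin.castSucc_castPred _ _
      by_cases hpq : σ⁻¹ L = τ⁻¹ L
      · -- p = q: both sides false
        constructor
        · intro h
          exfalso
          have hsub : ∑ x ∈ ({p'} : Finset (Fin n)), t x = ∑ x : Fin n, t x := by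
            refine Finset.sum_subset (Finset.subset_univ _) fun x _ hx => ?_
            rw [Finset.mem_singleton] at hx
            refine ht0 x (fun hh => ?_) (fun hh => ?_)
            · exact hx (Fin.castSucc_injective n (((hmemσ x).mp hh).trans hp'c.symm))
            · exact hx (Fin.castSucc_injective n
                (((hmemτ x).mp hh).trans (hpq ▸ hp'c.symm : τ⁻¹ L = p'.castSucc)))
          rw [← hsub, Finset.sum_singleton] at h
          have hσp : σ p'.castSucc = L := by rw [hp'c]; simp
          have hτp : τ p'.castSucc = L := by rw [hp'c, hpq]; simp
          have hc := hcon p'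
          rw [if_pos hσp, if_pos hτp] at hc
          have heq : σ p'.castSucc = τ p'.castSucc := hσp.trans hτp.symm
          simp only [ht, if_pos heq] at h
          by_cases hab : σ L = τ L
          · rw [if_pos (hc.mpr hab), if_pos hab] at h; omega
          · rw [if_neg (fun hh => hab (hc.mp hh)), if_neg hab] at h; omega
        · rintro ⟨-, -, -, h4, -, -⟩
          rw [Equiv.Perm.mul_apply, hpq] at h4
          simp at h4
          exact (ha h4.symm).elim
      · -- main case
        have hp'q' : p' ≠ q' := fun hh => hpq (by rw [← hp'c, ← hq'c, hh])
        have hsub : ∑ x ∈ ({p', q'} : Finset (Fin n)), t x = ∑ x : Fin n, t x := by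
          refine Finset.sum_subset (Finset.subset_univ _) fun x _ hx => ?_
          rw [Finset.mem_insert, Finset.mem_singleton] at hx
          push_neg at hx
          refine ht0 x (fun hh => ?_) (fun hh => ?_)
          · exact hx.1 (Fin.castSucc_injective n (((hmemσ x).mp hh).trans hp'c.symm))
          · exact hx.2 (Fin.castSucc_injective n (((hmemτ x).mp hh).trans hq'c.symm))
        rw [← hsub, Finset.sum_pair hp'q']
        -- compute t p'
        have hσp : σ p'.castSucc = L := by rw [hp'c]; simp
        have hτpL : τ p'.castSucc ≠ L := fun hh =>
          hpq (hp'c ▸ (hmemτ p').mp hh ▸ hp'c.symm ▸ rfl)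
        have hσqL : σ q'.castSucc ≠ L := fun hh =>
          hpq ((((hmemσ q').mp hh).symm.trans hq'c).symm ▸ rfl)
        have hτq : τ q'.castSucc = L := by rw [hq'c]; simp
        have hnep : σ p'.castSucc ≠ τ p'.castSucc := fun hh => hτpL (hh.symm.trans hσp)
        have hneq : σ q'.castSucc ≠ τ q'.castSucc := fun hh => hσqL (hh.trans hτq)
        have hcp := hcon p'
        rw [if_pos hσp, if_neg hτpL] at hcp
        have hcq := hcon q'
        rw [if_neg hσqL, if_pos hτq] at hcq
        simp only [ht, if_neg hnep, if_neg hneq]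
        constructor
        · intro h
          by_cases h1 : σ L = τ L
          · rw [if_pos h1] at h
            split_ifs at h <;> omega
          by_cases h2 : σ L = τ p'.castSucc
          swap
          · rw [if_neg (fun hh => h2 (hcp.mp hh))] at h
            split_ifs at h <;> omega
          by_cases h3 : σ q'.castSucc = τ L
          swap
          · rw [if_neg (fun hh => h3 (hcq.mp hh))] at h
            split_ifs at h <;> omega
          -- now σ L ≠ τ L, σ L = τ p, σ q = τ L
          refine ⟨fun hh => ha hh.symm, fun hh => hb hh.symm, h1, ?_, ?_, ?_⟩
          · rw [Equiv.Perm.mul_apply, ← hp'c, ← h2]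
          · rw [Equiv.Perm.mul_apply]; simp
          · rw [Equiv.Perm.mul_apply, ← h3, Equiv.Perm.inv_def, Equiv.symm_apply_apply]
            exact hτq
        · rintro ⟨-, -, h3, h4, -, h6⟩
          rw [Equiv.Perm.mul_apply] at h4 h6
          have h2 : σ L = τ p'.castSucc := by rw [hp'c, h4]
          have hq2 : σ⁻¹ (τ L) = τ⁻¹ L := by
            have := congrArg (τ⁻¹ ·) h6
            simpa using this
          have h5 : σ q'.castSucc = τ L := by
            rw [hq'c, ← hq2]
            simp
          rw [if_neg h3, if_pos (hcp.mpr h2), if_pos (hcq.mpr h5)]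
          ring
end

section
/- Let P ⊆ S_n be a permutation array with Hamming distance d (the minimum Hamming distance between distinct elements of P). Then for any positive integer m < d/3, the m-th contraction map is injective on P, i.e., |P^{CT^m}| = |P|. -/
lemma contract_spec {n : ℕ} (σ : Equiv.Perm (Fin (n + 1))) (y : Fin n)
    (h : σ (Fin.castSucc y) ≠ Fin.last n) :
    Fin.castSucc (contract σ y) = σ (Fin.castSucc y) := by
  have he : (finSuccEquivLast.permCongr σ) (some y) = some (contract σ y) := by
    refine (Equiv.removeNone_some _ ?_).symm
    simp only [Equiv.permCongr_apply, Equiv.symm_symm, finSuccEquivLast_symm_some]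
    rcases Fin.exists_castSucc_eq.2 h with ⟨z, hz⟩
    exact ⟨z, by rw [← hz, finSuccEquivLast_castSucc]⟩
  simp only [Equiv.permCongr_apply, Equiv.symm_symm, finSuccEquivLast_symm_some] at he
  have := congrArg finSuccEquivLast.symm he
  simpa using this.symm

lemma hd_le_contract {n : ℕ} (σ τ : Equiv.Perm (Fin (n + 1))) :
    hd σ τ ≤ hd (contract σ) (contract τ) + 3 := by
  classical
  set T := Finset.univ.filter fun y : Fin n => contract σ y ≠ contract τ y with hT
  set A := Finset.univ.filter fun y : Fin n => σ (Fin.castSucc y) = Fin.last n with hA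
  set B := Finset.univ.filter fun y : Fin n => τ (Fin.castSucc y) = Fin.last n with hB
  have hAcard : A.card ≤ 1 := by
    apply Finset.card_le_one.2
    intro a ha b hb
    simp only [hA, Finset.mem_filter] at ha hb
    have := ha.2.trans hb.2.symm
    exact Fin.castSucc_injective n (σ.injective this)
  have hBcard : B.card ≤ 1 := by
    apply Finset.card_le_one.2
    intro a ha b hb
    simp only [hB, Finset.mem_filter] at ha hb
    have := ha.2.trans hb.2.symm
    exact Fin.castSucc_injective n (τ.injective this)
  have hsub : (Finset.univ.filter fun x : Fin (n+1) => σ x ≠ τ x) ⊆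
      insert (Fin.last n) (Finset.image Fin.castSucc (T ∪ A ∪ B)) := by
    intro x hx
    simp only [Finset.mem_filter] at hx
    rcases Fin.eq_castSucc_or_eq_last x with ⟨y, rfl⟩ | rfl
    · refine Finset.mem_insert_of_mem (Finset.mem_image_of_mem _ ?_)
      by_cases ha : σ (Fin.castSucc y) = Fin.last n
      · exact Finset.mem_union_left _ (Finset.mem_union_right _ (by simp [hA, ha]))
      by_cases hb : τ (Fin.castSucc y) = Fin.last n
      · exact Finset.mem_union_right _ (by simp [hB, hb])
      refine Finset.mem_union_left _ (Finset.mem_union_left _ ?_)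
      simp only [hT, Finset.mem_filter, Finset.mem_univ, true_and]
      intro hc
      apply hx.2
      rw [← contract_spec σ y ha, ← contract_spec τ y hb, hc]
    · exact Finset.mem_insert_self _ _
  calc hd σ τ ≤ (insert (Fin.last n) (Finset.image Fin.castSucc (T ∪ A ∪ B))).card :=
        Finset.card_le_card hsub
    _ ≤ (Finset.image Fin.castSucc (T ∪ A ∪ B)).card + 1 := Finset.card_insert_le _ _
    _ ≤ (T ∪ A ∪ B).card + 1 := by
        exact Nat.add_le_add_right Finset.card_image_le 1
    _ ≤ (T.card + A.card + B.card) + 1 := by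
        refine Nat.add_le_add_right ?_ 1
        exact le_trans (Finset.card_union_le _ _)
          (Nat.add_le_add_right (Finset.card_union_le _ _) _)
    _ ≤ (T.card + 1 + 1) + 1 := by omega
    _ = hd (contract σ) (contract τ) + 3 := by rw [hd, ← hT]

lemma hd_eq_zero {n : ℕ} {σ τ : Equiv.Perm (Fin n)} (h : σ = τ) : hd σ τ = 0 := by
  simp [hd, h]

lemma hd_iter_le {m : ℕ} : ∀ {n : ℕ} (σ τ : Equiv.Perm (Fin (n + m))),
    contractIter m σ = contractIter m τ → hd σ τ ≤ 3 * m := by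
  induction m with
  | zero => intro n σ τ h; simpa using (hd_eq_zero h : hd σ τ = 0)
  | succ m ih =>
    intro n σ τ h
    have h1 : hd (contract σ) (contract τ) ≤ 3 * m := ih _ _ h
    have := hd_le_contract σ τ
    omega

theorem card_contractIter_image_eq (k m d : ℕ) (hm : 1 ≤ m)
    (P : Set (Equiv.Perm (Fin (k + m)))) (hdp : hdP P = d) (h3 : 3 * m < d) :
    (Set.image (contractIter m) P).ncard = P.ncard := by
  apply Set.ncard_image_of_injOn
  intro σ hσ τ hτ h
  by_contra hne
  have hmem : hd σ τ ∈ {d | ∃ σ ∈ P, ∃ τ ∈ P, σ ≠ τ ∧ hd σ τ = d} :=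
    ⟨σ, hσ, τ, hτ, hne, rfl⟩
  have hle : d ≤ hd σ τ := hdp ▸ Nat.sInf_le hmem
  have := hd_iter_le σ τ h
  omega
end

section
/- Let P ⊆ S_n be a permutation array with hd(P) = d and |P^CT| ≥ 2. Then hd(P^CT) > hd(P) if and only if: (1) any σ, τ ∈ P with hd(σ,τ) = d satisfy σ^CT = τ^CT; and (2) any σ, τ ∈ P with hd(σ,τ) > d satisfy hd(σ^CT, τ^CT) > d or σ^CT = τ^CT. -/
lemma finSuccEquivLast_of_ne {n : ℕ} (y : Fin (n + 1)) (h : y ≠ Fin.last n) :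
    finSuccEquivLast y = some (y.castPred h) := by
  conv_lhs => rw [← Fin.castSucc_castPred y h]
  rw [finSuccEquivLast_castSucc]

lemma contract_apply_of_ne {n : ℕ} (σ : Equiv.Perm (Fin (n + 1))) (x : Fin n)
    (h : σ x.castSucc ≠ Fin.last n) : (contract σ x).castSucc = σ x.castSucc := by
  have he : (finSuccEquivLast.permCongr σ) (some x) = some ((σ x.castSucc).castPred h) := by
    simp [Equiv.permCongr_apply, finSuccEquivLast_of_ne _ h]
  have h2 := Equiv.removeNone_some (finSuccEquivLast.permCongr σ) ⟨_, he⟩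
  rw [he] at h2
  have : contract σ x = (σ x.castSucc).castPred h := Option.some_injective _ h2
  rw [this, Fin.castSucc_castPred]

lemma contract_apply_of_eq {n : ℕ} (σ : Equiv.Perm (Fin (n + 1))) (x : Fin n)
    (h : σ x.castSucc = Fin.last n) : (contract σ x).castSucc = σ (Fin.last n) := by
  have hne : σ (Fin.last n) ≠ Fin.last n := by
    intro hc
    exact (Fin.castSucc_lt_last x).ne (σ.injective (h.trans hc.symm))
  have he : (finSuccEquivLast.permCongr σ) (some x) = none := by
    simp [Equiv.permCongr_apply, h]
  have h2 := Equiv.removeNone_none (finSuccEquivLast.permCongr σ) he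
  have h3 : (finSuccEquivLast.permCongr σ) none = some ((σ (Fin.last n)).castPred hne) := by
    simp [Equiv.permCongr_apply, finSuccEquivLast_of_ne _ hne]
  rw [h3] at h2
  have : contract σ x = (σ (Fin.last n)).castPred hne := Option.some_injective _ h2
  rw [this, Fin.castSucc_castPred]

lemma hd_eq_zero_iff {n : ℕ} {σ τ : Equiv.Perm (Fin n)} : hd σ τ = 0 ↔ σ = τ := by
  constructor
  · intro h
    ext x
    by_contra hx
    have : x ∈ Finset.univ.filter fun x => σ x ≠ τ x := by
      simp only [Finset.mem_filter, Finset.mem_univ, true_and]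
      exact fun h => hx (congrArg Fin.val h)
    rw [Finset.card_eq_zero.mp h] at this
    exact absurd this (Finset.notMem_empty x)
  · intro h; subst h; simp [hd]

lemma contract_diff_aux {n : ℕ} {σ τ : Equiv.Perm (Fin (n + 1))} {x : Fin n}
    (hx : contract σ x ≠ contract τ x) (he : σ x.castSucc = τ x.castSucc) :
    σ x.castSucc = Fin.last n ∧ σ (Fin.last n) ≠ τ (Fin.last n) := by
  by_cases hl : σ x.castSucc = Fin.last n
  · refine ⟨hl, ?_⟩
    intro hc
    apply hx
    apply Fin.castSucc_injective
    rw [contract_apply_of_eq σ x hl, contract_apply_of_eq τ x (he ▸ hl), hc]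
  · exfalso
    apply hx
    apply Fin.castSucc_injective
    rw [contract_apply_of_ne σ x hl, contract_apply_of_ne τ x (he ▸ hl), he]

lemma hd_contract_le {n : ℕ} (σ τ : Equiv.Perm (Fin (n + 1))) :
    hd (contract σ) (contract τ) ≤ hd σ τ := by
  classical
  apply Finset.card_le_card_of_injOn
    (fun x => if σ x.castSucc = τ x.castSucc then Fin.last n else x.castSucc)
  · intro x hx
    simp only [Finset.mem_coe, Finset.mem_filter, Finset.mem_univ, true_and] at hx ⊢
    by_cases he : σ x.castSucc = τ x.castSucc
    · simp only [he, if_true]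
      exact (contract_diff_aux hx he).2
    · simpa [he] using he
  · intro x hx y hy hxy
    simp only [Finset.coe_filter, Set.mem_setOf_eq, Finset.mem_univ, true_and] at hx hy
    simp only at hxy
    by_cases he : σ x.castSucc = τ x.castSucc <;>
      by_cases he' : σ y.castSucc = τ y.castSucc <;> simp [he, he'] at hxy
    · exact Fin.castSucc_injective _ <| σ.injective
        ((contract_diff_aux hx he).1.trans (contract_diff_aux hy he').1.symm)
    · exact absurd hxy.symm (Fin.castSucc_lt_last y).ne
    · exact hxy

theorem hdP_contract_gt_iff (n d : ℕ) (P : Set (Equiv.Perm (Fin (n + 1))))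
    (hdp : hdP P = d) (h2 : 2 ≤ (Set.image contract P).ncard) :
    hdP (Set.image contract P) > hdP P ↔
      ((∀ σ ∈ P, ∀ τ ∈ P, hd σ τ = d → contract σ = contract τ) ∧
        (∀ σ ∈ P, ∀ τ ∈ P, hd σ τ > d →
          hd (contract σ) (contract τ) > d ∨ contract σ = contract τ)) := by
  have hd_ge : ∀ σ ∈ P, ∀ τ ∈ P, σ ≠ τ → d ≤ hd σ τ := by
    intro σ hσ τ hτ hne
    rw [← hdp]
    exact Nat.sInf_le ⟨σ, hσ, τ, hτ, hne, rfl⟩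
  have hQ_le : ∀ σ ∈ P, ∀ τ ∈ P, contract σ ≠ contract τ →
      hdP (Set.image contract P) ≤ hd (contract σ) (contract τ) :=
    fun σ hσ τ hτ hne =>
      Nat.sInf_le ⟨contract σ, ⟨σ, hσ, rfl⟩, contract τ, ⟨τ, hτ, rfl⟩, hne, rfl⟩
  rw [hdp]
  constructor
  · intro hgt
    constructor
    · intro σ hσ τ hτ hde
      by_contra hc
      have h1 := hQ_le σ hσ τ hτ hc
      have h2 := hd_contract_le σ τ
      omega
    · intro σ hσ τ hτ hgt'
      by_cases hc : contract σ = contract τ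
      · exact Or.inr hc
      · exact Or.inl (lt_of_lt_of_le hgt (hQ_le σ hσ τ hτ hc))
  · rintro ⟨H1, H2⟩
    -- the inf for the image is attained
    obtain ⟨a, ha, b, hb, hab⟩ :=
      (Set.one_lt_ncard (Set.toFinite _)).mp (by omega : 1 < (Set.image contract P).ncard)
    have hne0 : {e | ∃ σ ∈ Set.image contract P, ∃ τ ∈ Set.image contract P,
        σ ≠ τ ∧ hd σ τ = e}.Nonempty := ⟨hd a b, a, ha, b, hb, hab, rfl⟩
    obtain ⟨a, ⟨σ, hσ, rfl⟩, b, ⟨τ, hτ, rfl⟩, hne, heq⟩ := Nat.sInf_mem hne0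
    show sInf _ > d
    rw [← heq]
    have hστ : σ ≠ τ := fun h => hne (h ▸ rfl)
    have hge := hd_ge σ hσ τ hτ hστ
    rcases eq_or_lt_of_le hge with h | h
    · exact absurd (H1 σ hσ τ hτ h.symm) hne
    · rcases H2 σ hσ τ hτ h with h' | h'
      · exact h'
      · exact absurd h' hne
end

section
/- If P ⊆ S_n is a permutation array with hd(P) ≥ 4, then hd(P^CT) ≤ hd(P). -/
lemma contract_of_castSucc {n : ℕ} (σ : Equiv.Perm (Fin (n + 1))) {i j : Fin n}
    (h : σ i.castSucc = j.castSucc) : contract σ i = j := by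
  have h1 : (finSuccEquivLast.permCongr σ) (some i) = some j := by
    simp [Equiv.permCongr_apply, h]
  have h2 := Equiv.removeNone_some _ ⟨j, h1⟩
  rw [h1] at h2
  exact Option.some_injective _ h2

lemma contract_of_last {n : ℕ} (σ : Equiv.Perm (Fin (n + 1))) {i j : Fin n}
    (h : σ i.castSucc = Fin.last n) (h' : σ (Fin.last n) = j.castSucc) :
    contract σ i = j := by
  have h1 : (finSuccEquivLast.permCongr σ) (some i) = none := by
    simp [Equiv.permCongr_apply, h]
  have h2 := Equiv.removeNone_none _ h1
  have h3 : (finSuccEquivLast.permCongr σ) none = some j := by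
    simp [Equiv.permCongr_apply, h']
  rw [h3] at h2
  exact Option.some_injective _ h2

/-- auxiliary: get a `castSucc` preimage -/
lemma exists_castSucc_eq {n : ℕ} {x : Fin (n + 1)} (h : x ≠ Fin.last n) :
    ∃ j : Fin n, x = j.castSucc := by
  rcases Fin.eq_castSucc_or_eq_last x with ⟨j, hj⟩ | hl
  · exact ⟨j, hj⟩
  · exact absurd hl h

lemma hd_le_three_of_contract_eq {n : ℕ} {σ τ : Equiv.Perm (Fin (n + 1))}
    (h : contract σ = contract τ) : hd σ τ ≤ 3 := by
  classical
  have hsub : (Finset.univ.filter fun x => σ x ≠ τ x) ⊆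
      {Fin.last n, σ.symm (Fin.last n), τ.symm (Fin.last n)} := by
    intro x hx
    simp only [Finset.mem_filter, Finset.mem_univ, true_and] at hx
    simp only [Finset.mem_insert, Finset.mem_singleton]
    by_contra hcon
    push_neg at hcon
    obtain ⟨h1, h2, h3⟩ := hcon
    obtain ⟨i, hi⟩ := exists_castSucc_eq h1
    have hσ : σ x ≠ Fin.last n := fun he => h2 (by rw [← σ.symm_apply_apply x, he])
    have hτ : τ x ≠ Fin.last n := fun he => h3 (by rw [← τ.symm_apply_apply x, he])
    obtain ⟨j, hj⟩ := exists_castSucc_eq hσ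
    obtain ⟨j', hj'⟩ := exists_castSucc_eq hτ
    have e1 : contract σ i = j := contract_of_castSucc σ (by rw [← hi]; exact hj)
    have e2 : contract τ i = j' := contract_of_castSucc τ (by rw [← hi]; exact hj')
    have : j = j' := by rw [← e1, ← e2, h]
    exact hx (by rw [hj, hj', this])
  calc hd σ τ ≤ ({Fin.last n, σ.symm (Fin.last n), τ.symm (Fin.last n)} : Finset _).card :=
        Finset.card_le_card hsub
    _ ≤ 3 := by
        apply le_trans (Finset.card_insert_le _ _)
        exact Nat.succ_le_succ (le_trans (Finset.card_insert_le _ _) (by simp))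

theorem hdP_contract_le (n : ℕ) (P : Set (Equiv.Perm (Fin (n + 1))))
    (h : 4 ≤ hdP P) : hdP (Set.image contract P) ≤ hdP P := by
  have hne : {d | ∃ σ ∈ P, ∃ τ ∈ P, σ ≠ τ ∧ hd σ τ = d}.Nonempty := by
    by_contra hc
    rw [Set.not_nonempty_iff_eq_empty] at hc
    rw [hdP, hc, Nat.sInf_empty] at h
    omega
  obtain ⟨σ, hσ, τ, hτ, hne', hd_eq⟩ := Nat.sInf_mem hne
  rw [hdP] at h
  have hcc : contract σ ≠ contract τ := by
    intro hcon
    have := hd_le_three_of_contract_eq hcon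
    rw [hd_eq] at this
    omega
  calc hdP (Set.image contract P)
      ≤ hd (contract σ) (contract τ) :=
        Nat.sInf_le ⟨contract σ, ⟨σ, hσ, rfl⟩, contract τ, ⟨τ, hτ, rfl⟩, hcc, rfl⟩
    _ ≤ hd σ τ := hd_contract_le σ τ
    _ = hdP P := hd_eq
end

section
/- Let σ, τ ∈ S_n and set i = σ⁻¹(n-1), j = τ⁻¹(n-1), a = τ(i), b = σ(j), c = σ(n-1), d = τ(n-1). If i, j, n-1 are pairwise distinct, a ≠ b, and c = d, then hd(σ,τ) = hd(σ^CT, τ^CT). -/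
/-! If `σ (n-1) = τ (n-1)`, the last position contributes nothing to `hd σ τ`, and at any other
position `x` contraction preserves whether `σ x = τ x`: if exactly one of `σ x`, `τ x` is `n-1`,
it is replaced by the common value `σ (n-1) = τ (n-1)`, which still differs from the other one,
an image of `x ≠ n-1`. -/

open Equiv

lemma castSucc_contract_apply {n : ℕ} (σ : Perm (Fin (n + 1))) (y : Fin n) :
    (contract σ y).castSucc =
      if σ y.castSucc = Fin.last n then σ (Fin.last n) else σ y.castSucc := by
  rw [← finSuccEquivLast_symm_some, contract]
  split_ifs with h
  · rw [removeNone_none _ (by simp [permCongr_apply, h])]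
    simp [permCongr_apply]
  · rw [removeNone_some _ (Option.ne_none_iff_exists'.1 (by
      simpa [permCongr_apply] using (finSuccEquivLast.injective.ne h).trans_eq finSuccEquivLast_last))]
    simp [permCongr_apply]

lemma contract_apply_eq_contract_apply_iff {n : ℕ} {σ τ : Perm (Fin (n + 1))}
    (hlast : σ (Fin.last n) = τ (Fin.last n)) (y : Fin n) :
    contract σ y = contract τ y ↔ σ y.castSucc = τ y.castSucc := by
  have hσ : σ (Fin.last n) ≠ σ y.castSucc := σ.injective.ne (Fin.castSucc_ne_last y).symm
  have hτ : τ (Fin.last n) ≠ τ y.castSucc := τ.injective.ne (Fin.castSucc_ne_last y).symm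
  rw [← Fin.castSucc_inj, castSucc_contract_apply, castSucc_contract_apply]
  split_ifs with h₁ h₂ h₂
  · simp [hlast, h₁, h₂]
  · exact iff_of_false (hlast ▸ hτ) (h₁ ▸ Ne.symm h₂)
  · exact iff_of_false (hlast ▸ hσ).symm (h₂ ▸ h₁)
  · rfl

lemma hd_contract_of_apply_last_eq {n : ℕ} {σ τ : Perm (Fin (n + 1))}
    (hlast : σ (Fin.last n) = τ (Fin.last n)) :
    hd (contract σ) (contract τ) = hd σ τ := by
  simp only [hd, Finset.card_filter, Fin.sum_univ_castSucc, hlast, ne_eq, not_true_eq_false,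
    if_false, add_zero, contract_apply_eq_contract_apply_iff hlast]

theorem hd_eq_hd_contract_of_general (n : ℕ) (σ τ : Equiv.Perm (Fin (n + 1)))
    (hcd : σ (Fin.last n) = τ (Fin.last n)) :
    hd σ τ = hd (contract σ) (contract τ) :=
  (hd_contract_of_apply_last_eq hcd).symm

theorem hd_eq_hd_contract_of (n : ℕ) (σ τ : Equiv.Perm (Fin (n + 1)))
    (hij : σ⁻¹ (Fin.last n) ≠ τ⁻¹ (Fin.last n))
    (hi : σ⁻¹ (Fin.last n) ≠ Fin.last n) (hj : τ⁻¹ (Fin.last n) ≠ Fin.last n)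
    (hab : τ (σ⁻¹ (Fin.last n)) ≠ σ (τ⁻¹ (Fin.last n)))
    (hcd : σ (Fin.last n) = τ (Fin.last n)) :
    hd σ τ = hd (contract σ) (contract τ) :=
  hd_eq_hd_contract_of_general n σ τ hcd
end

section
/- If σ, τ ∈ S_n satisfy hd(σ,τ) − hd(σ^CT, τ^CT) = 2, then σ⁻¹τ(n-1) ≠ n-1, i.e., the permutation σ⁻¹τ does not fix the symbol n-1. -/
/-! Writing `ℓ` for the last symbol, deleting `ℓ` from the cycles of `σ` amounts to swapping
`σ⁻¹ ℓ` with `ℓ` on the right, so that `σ * swap (σ⁻¹ ℓ) ℓ` fixes `ℓ`, and then restricting.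
If `τ * σ⁻¹` fixes `ℓ`, then `σ` and `τ` share the preimage of `ℓ`, the same transposition
serves both, and the Hamming distance, invariant under a common right factor and under
extension by a fixed point, does not drop. -/

open Equiv

theorem Equiv.optionCongr_removeNone {α : Type*} [DecidableEq α] (σ : Perm (Option α)) :
    (removeNone σ).optionCongr = σ * swap none (σ⁻¹ none) := by
  have h := map_equiv_removeNone σ⁻¹
  rw [Perm.inv_def, ← removeNone_symm, optionCongr_symm, ← Perm.inv_def, ← Perm.inv_def,
    inv_eq_iff_eq_inv, mul_inv_rev, swap_inv, inv_inv] at h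
  exact h

theorem extendPerm_contract {n : ℕ} (σ : Perm (Fin (n + 1))) :
    extendPerm (contract σ) = σ * swap (σ⁻¹ (Fin.last n)) (Fin.last n) := by
  rw [extendPerm, contract, optionCongr_removeNone, permCongr_symm, permCongr_mul,
    ← permCongr_symm, symm_apply_apply]
  congr 1
  simp [Perm.inv_def, permCongr_def, swap_comm]

@[simp]
theorem extendPerm_castSucc {n : ℕ} (π : Perm (Fin n)) (x : Fin n) :
    extendPerm π x.castSucc = (π x).castSucc := by
  simp [extendPerm]

@[simp]
theorem extendPerm_last {n : ℕ} (π : Perm (Fin n)) : extendPerm π (Fin.last n) = Fin.last n := by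
  simp [extendPerm]

theorem hd_extendPerm {n : ℕ} (σ τ : Perm (Fin n)) :
    hd (extendPerm σ) (extendPerm τ) = hd σ τ := by
  simp [hd, Finset.card_filter, Fin.sum_univ_castSucc]

theorem hd_mul_right {n : ℕ} (σ τ π : Perm (Fin n)) : hd (σ * π) (τ * π) = hd σ τ :=
  Finset.card_equiv π fun _ => by simp only [Finset.mem_filter_univ]; rfl

theorem hd_contract_of_inv_last_eq {n : ℕ} {σ τ : Perm (Fin (n + 1))}
    (h : σ⁻¹ (Fin.last n) = τ⁻¹ (Fin.last n)) : hd (contract σ) (contract τ) = hd σ τ := by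
  rw [← hd_extendPerm, extendPerm_contract, extendPerm_contract, h, hd_mul_right]

theorem ne_last_of_hd_sub_eq_two (n : ℕ) (σ τ : Equiv.Perm (Fin (n + 1)))
    (h : (hd σ τ : ℤ) - (hd (contract σ) (contract τ) : ℤ) = 2) :
    (τ * σ⁻¹) (Fin.last n) ≠ Fin.last n := by
  intro hfix
  have hlast : σ⁻¹ (Fin.last n) = τ⁻¹ (Fin.last n) := Perm.eq_inv_iff_eq.mpr hfix
  rw [hd_contract_of_inv_last_eq hlast] at h
  omega
end

section
/- Let σ, τ ∈ S_n with hd(σ,τ) = d, let m ∈ {1,...,n-1}, and assume the disjoint cycle decomposition of σ⁻¹τ has no cycle of odd length ℓ with 3 ≤ ℓ ≤ 2m+1 (i.e., no orbit of σ⁻¹τ has odd size between 3 and 2m+1). Then hd(σ^{CT^m}, τ^{CT^m}) ≥ d − 2m. -/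
set_option linter.unusedVariables false

theorem Equiv.Perm.apply_inv_self {α : Type*} (f : Equiv.Perm α) (x : α) : f (f⁻¹ x) = x :=
  f.apply_symm_apply x

theorem Equiv.Perm.inv_apply_self {α : Type*} (f : Equiv.Perm α) (x : α) : f⁻¹ (f x) = x :=
  f.symm_apply_apply x

open Equiv Equiv.Perm Finset

variable {n : ℕ}

lemma fsel_eq_some {y : Fin (n+1)} {z : Fin n} (h : finSuccEquivLast y = some z) :
    y = z.castSucc := by
  have := congrArg finSuccEquivLast.symm h
  simpa using this

lemma contract_eq (σ : Perm (Fin (n+1))) (x : Fin n) :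
    (contract σ x).castSucc = if σ x.castSucc = Fin.last n then σ (Fin.last n) else σ x.castSucc := by
  by_cases h : σ x.castSucc = Fin.last n
  · rw [if_pos h]
    have h1 : (finSuccEquivLast.permCongr σ) (some x) = none := by
      simp [Equiv.permCongr_apply, h]
    have h2 := Equiv.removeNone_none _ h1
    have h3 : (finSuccEquivLast.permCongr σ) none = finSuccEquivLast (σ (Fin.last n)) := by
      simp [Equiv.permCongr_apply]
    rw [h3] at h2
    exact (fsel_eq_some h2.symm).symm
  · rw [if_neg h]
    have h1 : ∃ z, (finSuccEquivLast.permCongr σ) (some x) = some z := by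
      simp only [Equiv.permCongr_apply, Equiv.symm_trans_apply]
      rcases Fin.eq_castSucc_or_eq_last (σ x.castSucc) with ⟨z, hz⟩ | hl
      · exact ⟨z, by simp [hz]⟩
      · exact absurd hl h
    have h2 := Equiv.removeNone_some _ h1
    have h3 : (finSuccEquivLast.permCongr σ) (some x) = finSuccEquivLast (σ x.castSucc) := by
      simp [Equiv.permCongr_apply]
    rw [h3] at h2
    exact (fsel_eq_some h2.symm).symm

lemma pi'_spec (σ τ : Perm (Fin (n+1))) (y : Fin n) :
    ((contract τ * (contract σ)⁻¹) y).castSucc =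
      if y.castSucc = σ (Fin.last n) then
        (if (τ * σ⁻¹) (Fin.last n) = Fin.last n then (τ * σ⁻¹) (σ (Fin.last n))
         else (τ * σ⁻¹) (Fin.last n))
      else
        (if y.castSucc = (τ * σ⁻¹)⁻¹ (Fin.last n) then (τ * σ⁻¹) (σ (Fin.last n))
         else (τ * σ⁻¹) y.castSucc) := by
  set t := Fin.last n with ht
  set x : Fin n := (contract σ)⁻¹ y with hx
  have hyx : contract σ x = y := Equiv.Perm.apply_inv_self _ _
  have h1 := contract_eq σ x
  rw [hyx] at h1
  have hπ' : (contract τ * (contract σ)⁻¹) y = contract τ x := rfl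
  rw [hπ', contract_eq τ x]
  by_cases hA : σ x.castSucc = t
  · have hyv : y.castSucc = σ t := by rw [h1, if_pos hA]
    have hxs : x.castSucc = σ⁻¹ t := by rw [← hA]; simp
    rw [if_pos hyv, hxs]
    have hτσ : τ (σ⁻¹ t) = (τ * σ⁻¹) t := rfl
    by_cases hB : (τ * σ⁻¹) t = t
    · rw [if_pos (by rw [hτσ, hB]), if_pos hB]
      have : (τ * σ⁻¹) (σ t) = τ t := by simp [Equiv.Perm.mul_apply]
      rw [this]
    · rw [if_neg (by rw [hτσ]; exact hB), if_neg hB, hτσ]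
  · have hyv : y.castSucc = σ x.castSucc := by rw [h1, if_neg hA]
    have hyv' : y.castSucc ≠ σ t := by
      rw [hyv]; intro h
      exact absurd (σ.injective h) (Fin.ne_of_lt (Fin.castSucc_lt_last x))
    have hxs : x.castSucc = σ⁻¹ y.castSucc := by rw [hyv]; simp
    rw [if_neg hyv', hxs]
    have hτσ : τ (σ⁻¹ y.castSucc) = (τ * σ⁻¹) y.castSucc := rfl
    by_cases hB : (τ * σ⁻¹) y.castSucc = t
    · have hyu : y.castSucc = (τ * σ⁻¹)⁻¹ t := by rw [← hB]; simp
      rw [if_pos (by rw [hτσ]; exact hB), if_pos hyu]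
      have : (τ * σ⁻¹) (σ t) = τ t := by simp [Equiv.Perm.mul_apply]
      rw [this]
    · have hyu : y.castSucc ≠ (τ * σ⁻¹)⁻¹ t := by
        intro h; apply hB; rw [h]; simp
      rw [if_neg (by rw [hτσ]; exact hB), if_neg hyu, hτσ]

section Generic
variable {α : Type*} [DecidableEq α] [Fintype α]
set_option linter.unusedSectionVars false

lemma sameCycle_fixed {ρ : Perm α} {x w : α} (hw : ρ w = w) (h : ρ.SameCycle x w) : x = w := by
  obtain ⟨i, hi⟩ := h
  have : (ρ ^ (-i)) w = w := (Function.IsFixedPt.perm_zpow hw (-i))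
  calc x = (ρ ^ (-i)) ((ρ ^ i) x) := by simp [← Equiv.Perm.mul_apply, ← zpow_add]
  _ = w := by rw [hi, this]

lemma invariant_closed {ρ : Perm α} {S : Finset α} (hS : ∀ w ∈ S, ρ w ∈ S) :
    ∀ x ∈ S, ∀ w, ρ.SameCycle x w → w ∈ S := by
  have hinv : ∀ w ∈ S, ρ⁻¹ w ∈ S := by
    have hsurj := Finset.surj_on_of_inj_on_of_card_le (fun x (_ : x ∈ S) => ρ x) hS
        (fun a₁ a₂ _ _ h => ρ.injective h) le_rfl
    intro w hw
    obtain ⟨x, hx, hxw⟩ := hsurj w hw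
    replace hxw := hxw.symm
    rwa [show ρ⁻¹ w = x by rw [← hxw]; simp]
  intro x hx w hw
  obtain ⟨i, hi⟩ := hw
  subst hi
  induction i using Int.induction_on with
  | zero => simpa using hx
  | succ i ih =>
      have : (ρ ^ (i + 1 : ℤ)) x = ρ ((ρ ^ (i : ℤ)) x) := by
        rw [← Equiv.Perm.mul_apply, ← zpow_one_add, add_comm]
      rw [this]; exact hS _ ih
  | pred i ih =>
      have : (ρ ^ (-i - 1 : ℤ)) x = ρ⁻¹ ((ρ ^ (-i : ℤ)) x) := by
        rw [← zpow_neg_one, ← Equiv.Perm.mul_apply, ← zpow_add]; ring_nf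
      rw [this]; exact hinv _ ih

lemma pow_mem_closed {ρ : Perm α} {S : Finset α} (hS : ∀ w ∈ S, ρ w ∈ S) {x : α} (hx : x ∈ S) :
    ∀ i : ℕ, (ρ ^ i) x ∈ S := by
  intro i
  exact invariant_closed hS x hx _ ⟨(i : ℤ), by simp⟩

end Generic

lemma hd_eq {N : ℕ} (σ τ : Perm (Fin N)) : hd σ τ = (τ * σ⁻¹).support.card := by
  unfold hd
  apply Finset.card_bij (fun x _ => σ x)
  · intro a ha
    simp only [Finset.mem_filter, Finset.mem_univ, true_and] at ha ⊢
    rw [Equiv.Perm.mem_support, Equiv.Perm.mul_apply]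
    simp only [Equiv.Perm.inv_apply_self]
    exact fun h => ha h.symm
  · intro a _ b _ h
    exact σ.injective h
  · intro z hz
    simp only [Equiv.Perm.mem_support, Equiv.Perm.mul_apply] at hz
    refine ⟨σ⁻¹ z, ?_, by simp⟩
    simp only [Finset.mem_filter, Finset.mem_univ, true_and, Equiv.Perm.apply_inv_self]
    intro h
    exact hz h.symm

lemma hit_lemma (ρ' : Perm (Fin n)) (π : Perm (Fin (n+1))) (K : Finset (Fin n))
    (hpt : ∀ w : Fin n, w ∉ K → (ρ' w).castSucc = π w.castSucc)
    (z : Fin n) (i0 : ℕ) (k0 : Fin n) (hk0 : k0 ∈ K) (hi0 : (π ^ i0) z.castSucc = k0.castSucc) :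
    ∃ k ∈ K, ρ'.SameCycle z k ∧ π.SameCycle z.castSucc k.castSucc := by
  classical
  have hex : ∃ i, ∃ k ∈ K, (π ^ i) z.castSucc = k.castSucc := ⟨i0, k0, hk0, hi0⟩
  set j := Nat.find hex with hjdef
  obtain ⟨k, hk, hkj⟩ := Nat.find_spec hex
  have claim : ∀ i ≤ j, ((ρ' ^ i) z).castSucc = (π ^ i) z.castSucc := by
    intro i hi
    induction i with
    | zero => simp
    | succ i ih =>
        have hij : i < j := lt_of_lt_of_le (Nat.lt_succ_self i) hi
        have hIH := ih (le_of_lt hij)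
        have hnot : (ρ' ^ i) z ∉ K := by
          intro hmem
          exact Nat.find_min hex hij ⟨_, hmem, hIH.symm⟩
        have e1 : (ρ' ^ (i+1)) z = ρ' ((ρ' ^ i) z) := by
          rw [pow_succ', Equiv.Perm.mul_apply]
        have e2 : (π ^ (i+1)) z.castSucc = π ((π ^ i) z.castSucc) := by
          rw [pow_succ', Equiv.Perm.mul_apply]
        rw [e1, e2, hpt _ hnot, hIH]
  have hfin : ((ρ' ^ j) z).castSucc = k.castSucc := by rw [claim j le_rfl, hkj]
  have hzk : (ρ' ^ j) z = k := Fin.castSucc_injective _ hfin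
  exact ⟨k, hk, ⟨(j : ℤ), by rw [zpow_natCast, hzk]⟩, ⟨(j : ℤ), by rw [zpow_natCast, hkj]⟩⟩

section Transfer
variable {ρ' : Perm (Fin n)} {π : Perm (Fin (n+1))} {a₁ a₂ : Fin (n+1)}
variable (hpt : ∀ w : Fin n, w.castSucc ≠ a₁ → w.castSucc ≠ a₂ → (ρ' w).castSucc = π w.castSucc)

include hpt

lemma TL1 {x : Fin n} (havoid : ∀ w, ρ'.SameCycle x w → w.castSucc ≠ a₁ ∧ w.castSucc ≠ a₂) :
    ∀ i : ℕ, ((ρ' ^ i) x).castSucc = (π ^ i) x.castSucc := by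
  intro i
  induction i with
  | zero => simp
  | succ i ih =>
      have hmem : ρ'.SameCycle x ((ρ' ^ i) x) := ⟨(i : ℤ), by rw [zpow_natCast]⟩
      obtain ⟨h1, h2⟩ := havoid _ hmem
      have e1 : (ρ' ^ (i+1)) x = ρ' ((ρ' ^ i) x) := by rw [pow_succ', Equiv.Perm.mul_apply]
      have e2 : (π ^ (i+1)) x.castSucc = π ((π ^ i) x.castSucc) := by
        rw [pow_succ', Equiv.Perm.mul_apply]
      rw [e1, e2, hpt _ h1 h2, ih]

lemma TL2 {x : Fin n} (havoid : ∀ w, ρ'.SameCycle x w → w.castSucc ≠ a₁ ∧ w.castSucc ≠ a₂)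
    {w' : Fin (n+1)} (h : π.SameCycle x.castSucc w') :
    ∃ w : Fin n, w' = w.castSucc ∧ ρ'.SameCycle x w := by
  obtain ⟨i, _, hi⟩ := h.exists_pow_eq'
  exact ⟨(ρ' ^ i) x, by rw [TL1 hpt havoid i, hi], ⟨(i : ℤ), by rw [zpow_natCast]⟩⟩

lemma TL3 {x : Fin n} (havoid : ∀ w, ρ'.SameCycle x w → w.castSucc ≠ a₁ ∧ w.castSucc ≠ a₂)
    (w : Fin n) : ρ'.SameCycle x w ↔ π.SameCycle x.castSucc w.castSucc := by
  constructor
  · intro h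
    obtain ⟨i, _, hi⟩ := h.exists_pow_eq'
    exact ⟨(i : ℤ), by rw [zpow_natCast, ← TL1 hpt havoid i, hi]⟩
  · intro h
    obtain ⟨w0, hw0, hsc⟩ := TL2 hpt havoid h
    rwa [Fin.castSucc_injective _ hw0.symm] at hsc

lemma TL4 {x : Fin n} (havoid : ∀ w, ρ'.SameCycle x w → w.castSucc ≠ a₁ ∧ w.castSucc ≠ a₂) :
    x ∈ ρ'.support ↔ x.castSucc ∈ π.support := by
  have := TL1 hpt havoid 1
  simp only [pow_one] at this
  rw [Equiv.Perm.mem_support, Equiv.Perm.mem_support, ← this]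
  constructor
  · intro h hc; exact h (Fin.castSucc_injective _ hc)
  · intro h hc; exact h (by rw [hc])

lemma TL5 {x : Fin n} (havoid : ∀ w, ρ'.SameCycle x w → w.castSucc ≠ a₁ ∧ w.castSucc ≠ a₂)
    (hx : x ∈ ρ'.support) :
    (π.cycleOf x.castSucc).support = (ρ'.cycleOf x).support.map Fin.castSuccEmb := by
  ext w'
  simp only [Finset.mem_map, Equiv.Perm.mem_support_cycleOf_iff, Fin.coe_castSuccEmb]
  constructor
  · rintro ⟨hsc, _⟩
    obtain ⟨w, rfl, hw⟩ := TL2 hpt havoid hsc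
    exact ⟨w, ⟨hw, hx⟩, rfl⟩
  · rintro ⟨w, ⟨hw, _⟩, rfl⟩
    exact ⟨(TL3 hpt havoid w).1 hw, (TL4 hpt havoid).1 hx⟩

lemma TL6 {x : Fin n} (havoid : ∀ w, ρ'.SameCycle x w → w.castSucc ≠ a₁ ∧ w.castSucc ≠ a₂)
    (hx : x ∈ ρ'.support) :
    (π.cycleOf x.castSucc).support.card = (ρ'.cycleOf x).support.card := by
  rw [TL5 hpt havoid hx, Finset.card_map]

end Transfer

def fam {N : ℕ} (r : ℕ) (π : Perm (Fin N)) (R : Finset (Fin N)) : Prop :=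
  (∀ x ∈ R, x ∈ π.support ∧ Odd ((π.cycleOf x).support.card) ∧ 3 ≤ (π.cycleOf x).support.card) ∧
  (∀ x ∈ R, ∀ y ∈ R, x ≠ y → ¬ π.SameCycle x y) ∧
  (∑ x ∈ R, ((π.cycleOf x).support.card - 1)) ≤ 2 * r

lemma supp_le {π : Perm (Fin (n+1))} {π' : Perm (Fin n)} (D : Finset (Fin (n+1)))
    (hD : ∀ z ∈ π.support, z ∉ D → ∃ y : Fin n, y.castSucc = z ∧ y ∈ π'.support) :
    π.support.card ≤ π'.support.card + D.card := by
  have hsub : π.support ⊆ π'.support.map Fin.castSuccEmb ∪ D := by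
    intro z hz
    rw [Finset.mem_union]
    by_cases hzD : z ∈ D
    · exact Or.inr hzD
    · obtain ⟨y, hy1, hy2⟩ := hD z hz hzD
      exact Or.inl (Finset.mem_map.mpr ⟨y, hy2, hy1⟩)
  calc π.support.card ≤ (π'.support.map Fin.castSuccEmb ∪ D).card := Finset.card_le_card hsub
  _ ≤ (π'.support.map Fin.castSuccEmb).card + D.card := Finset.card_union_le _ _
  _ = π'.support.card + D.card := by rw [Finset.card_map]

section Assemble
variable {ρ' : Perm (Fin n)} {π : Perm (Fin (n+1))} {a₁ a₂ : Fin (n+1)}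
variable (hpt : ∀ w : Fin n, w.castSucc ≠ a₁ → w.castSucc ≠ a₂ → (ρ' w).castSucc = π w.castSucc)
include hpt

lemma assembleA {r : ℕ} {R' Rs : Finset (Fin n)} (hsub : Rs ⊆ R') (hfam : fam r ρ' R')
    (hav : ∀ x ∈ Rs, ∀ w, ρ'.SameCycle x w → w.castSucc ≠ a₁ ∧ w.castSucc ≠ a₂) :
    fam (r+1) π (Rs.map Fin.castSuccEmb) ∧
    (∑ x ∈ Rs.map Fin.castSuccEmb, ((π.cycleOf x).support.card - 1))
      = ∑ x ∈ Rs, ((ρ'.cycleOf x).support.card - 1) := by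
  obtain ⟨h1, h2, h3⟩ := hfam
  have hcards : ∀ x ∈ Rs, (π.cycleOf x.castSucc).support.card = (ρ'.cycleOf x).support.card :=
    fun x hx => TL6 hpt (hav x hx) (h1 x (hsub hx)).1
  have hsum : (∑ x ∈ Rs.map Fin.castSuccEmb, ((π.cycleOf x).support.card - 1))
      = ∑ x ∈ Rs, ((ρ'.cycleOf x).support.card - 1) := by
    rw [Finset.sum_map]
    exact Finset.sum_congr rfl (fun x hx => by rw [Fin.coe_castSuccEmb, hcards x hx])
  refine ⟨⟨?_, ?_, ?_⟩, hsum⟩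
  · rintro z hz
    obtain ⟨x, hx, rfl⟩ := Finset.mem_map.mp hz
    rw [Fin.coe_castSuccEmb]
    refine ⟨(TL4 hpt (hav x hx)).1 (h1 x (hsub hx)).1, ?_, ?_⟩
    · rw [hcards x hx]; exact (h1 x (hsub hx)).2.1
    · rw [hcards x hx]; exact (h1 x (hsub hx)).2.2
  · rintro z hz w hw hzw
    obtain ⟨x, hx, rfl⟩ := Finset.mem_map.mp hz
    obtain ⟨y, hy, rfl⟩ := Finset.mem_map.mp hw
    rw [Fin.coe_castSuccEmb]
    intro hsc
    have hxy : x ≠ y := fun h => hzw (by rw [h])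
    exact h2 x (hsub hx) y (hsub hy) hxy ((TL3 hpt (hav x hx) y).2 hsc)
  · rw [hsum]
    calc (∑ x ∈ Rs, ((ρ'.cycleOf x).support.card - 1))
        ≤ ∑ x ∈ R', ((ρ'.cycleOf x).support.card - 1) := Finset.sum_le_sum_of_subset hsub
    _ ≤ 2 * r := h3
    _ ≤ 2 * (r+1) := by omega

lemma assembleB {r : ℕ} {R' Rs : Finset (Fin n)} (hsub : Rs ⊆ R') (hfam : fam r ρ' R')
    (hav : ∀ x ∈ Rs, ∀ w, ρ'.SameCycle x w → w.castSucc ≠ a₁ ∧ w.castSucc ≠ a₂)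
    (t : Fin (n+1)) (htlast : ∀ y : Fin n, y.castSucc ≠ t)
    (htsupp : t ∈ π.support) (htodd : Odd ((π.cycleOf t).support.card))
    (ht3 : 3 ≤ (π.cycleOf t).support.card)
    (htdisj : ∀ x ∈ Rs, ¬ π.SameCycle t x.castSucc)
    (hsum2 : (∑ x ∈ Rs, ((ρ'.cycleOf x).support.card - 1)) + ((π.cycleOf t).support.card - 1)
       ≤ 2 * (r+1)) :
    fam (r+1) π (insert t (Rs.map Fin.castSuccEmb)) ∧
    (insert t (Rs.map Fin.castSuccEmb)).card = Rs.card + 1 := by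
  obtain ⟨⟨g1, g2, _⟩, hsum⟩ := assembleA hpt hsub hfam hav
  have htnot : t ∉ Rs.map Fin.castSuccEmb := by
    intro h
    obtain ⟨x, _, hx⟩ := Finset.mem_map.mp h
    exact htlast x hx
  refine ⟨⟨?_, ?_, ?_⟩, by rw [Finset.card_insert_of_notMem htnot, Finset.card_map]⟩
  · intro z hz
    rcases Finset.mem_insert.mp hz with rfl | hz'
    · exact ⟨htsupp, htodd, ht3⟩
    · exact g1 z hz'
  · intro z hz w hw hzw
    rcases Finset.mem_insert.mp hz with rfl | hz' <;>
      rcases Finset.mem_insert.mp hw with rfl | hw'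
    · exact absurd rfl hzw
    · obtain ⟨y, hy, rfl⟩ := Finset.mem_map.mp hw'
      exact htdisj y hy
    · obtain ⟨y, hy, rfl⟩ := Finset.mem_map.mp hz'
      intro hsc
      exact htdisj y hy hsc.symm
    · exact g2 z hz' w hw' hzw
  · rw [Finset.sum_insert htnot, hsum, add_comm]
    exact hsum2

end Assemble

lemma step (σ τ : Perm (Fin (n+1))) (r : ℕ) (R' : Finset (Fin n))
    (hR' : fam r (contract τ * (contract σ)⁻¹) R') :
    ∃ R : Finset (Fin (n+1)), fam (r+1) (τ * σ⁻¹) R ∧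
      hd σ τ + R'.card ≤ hd (contract σ) (contract τ) + 2 + R.card := by
  classical
  set t : Fin (n+1) := Fin.last n with htdef
  set π : Perm (Fin (n+1)) := τ * σ⁻¹ with hπdef
  set π' : Perm (Fin n) := contract τ * (contract σ)⁻¹ with hπ'def
  set v : Fin (n+1) := σ t with hvdef
  set u : Fin (n+1) := π⁻¹ t with hudef
  have hdσ : hd σ τ = π.support.card := hd_eq σ τ
  have hdσ' : hd (contract σ) (contract τ) = π'.support.card := hd_eq _ _
  have hne : ∀ y : Fin n, y.castSucc ≠ t := fun y => (Fin.castSucc_lt_last y).ne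
  have spec : ∀ y : Fin n, (π' y).castSucc =
      if y.castSucc = v then (if π t = t then π v else π t)
      else (if y.castSucc = u then π v else π y.castSucc) := by
    intro y
    rw [pi'_spec σ τ y]
  have hpt_uv : ∀ w : Fin n, w.castSucc ≠ u → w.castSucc ≠ v →
      (π' w).castSucc = π w.castSucc := by
    intro w h1 h2
    rw [spec w, if_neg h2, if_neg h1]
  rw [hdσ, hdσ']
  by_cases h0 : π t = t
  · -- C0 : t is a fixed point of π
    have hutt : u = t := by rw [hudef, ← h0, Equiv.Perm.inv_apply_self]; exact h0.symm
    have specC0 : ∀ w : Fin n, (π' w).castSucc = π w.castSucc := by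
      intro w
      rw [spec w]
      by_cases h1 : w.castSucc = v
      · rw [if_pos h1, if_pos h0, h1]
      · rw [if_neg h1, if_neg (by rw [hutt]; exact hne w)]
    have hsupp : π.support.card ≤ π'.support.card + (∅ : Finset (Fin (n+1))).card := by
      apply supp_le
      intro z hz _
      have hzt : z ≠ t := by
        intro h; rw [h] at hz; exact (Equiv.Perm.mem_support.mp hz) h0
      obtain ⟨y, hy⟩ := Fin.eq_castSucc_of_ne_last hzt
      refine ⟨y, hy, Equiv.Perm.mem_support.mpr ?_⟩
      intro hcon
      apply Equiv.Perm.mem_support.mp hz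
      rw [← hy, ← specC0 y, hcon, hy]
    obtain ⟨hfam, -⟩ := assembleA (a₁ := t) (a₂ := t) (fun w _ _ => specC0 w)
      (Finset.Subset.refl R') hR' (fun x _ w _ => ⟨hne w, hne w⟩)
    refine ⟨R'.map Fin.castSuccEmb, hfam, ?_⟩
    rw [Finset.card_map]
    simp only [Finset.card_empty] at hsupp
    omega
  · have hut : u ≠ t := by
      rw [hudef]
      intro h
      have h2 := congrArg π h
      rw [Equiv.Perm.apply_inv_self] at h2
      exact h0 h2.symm
    obtain ⟨u₀, hu₀⟩ : ∃ y : Fin n, y.castSucc = u := Fin.eq_castSucc_of_ne_last hut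
    by_cases hvtu : v = t ∨ v = u
    · -- C1 : shrink
      have hπu : π u = t := by rw [hudef]; exact Equiv.Perm.apply_inv_self π t
      have spec_u : (π' u₀).castSucc = π t := by
        rcases hvtu with hv | hv
        · rw [spec, if_neg (by rw [hv]; exact hne u₀), hu₀, if_pos rfl, hv]
        · rw [spec, if_pos (show u₀.castSucc = v by rw [hv]; exact hu₀), if_neg h0]
      have hptC1 : ∀ w : Fin n, w.castSucc ≠ u → (π' w).castSucc = π w.castSucc := by
        intro w hw
        apply hpt_uv w hw
        rcases hvtu with hv | hv
        · rw [hv]; exact hne w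
        · rw [hv]; exact hw
      by_cases h2t : π (π t) = t
      · -- C1a : 2-cycle disappears
        have hptu : π t = u := by
          rw [hudef]
          apply π.injective
          rw [Equiv.Perm.apply_inv_self]
          exact h2t
        have hfix : π' u₀ = u₀ := by
          apply Fin.castSucc_injective
          rw [spec_u, hptu, hu₀]
        have hsupp : π.support.card ≤ π'.support.card + ({t, u} : Finset (Fin (n+1))).card := by
          apply supp_le
          intro z hz hzD
          simp only [Finset.mem_insert, Finset.mem_singleton, not_or] at hzD
          obtain ⟨hzt, hzu⟩ := hzD
          obtain ⟨y, hy⟩ := Fin.eq_castSucc_of_ne_last hzt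
          refine ⟨y, hy, Equiv.Perm.mem_support.mpr ?_⟩
          intro hcon
          apply Equiv.Perm.mem_support.mp hz
          have := hptC1 y (by rw [hy]; exact hzu)
          rw [hcon, hy] at this
          exact this.symm
        have hav : ∀ x ∈ R', ∀ w, π'.SameCycle x w → w.castSucc ≠ u ∧ w.castSucc ≠ u := by
          intro x hx w hsc
          have : w.castSucc ≠ u := by
            intro h
            have hw : w = u₀ := Fin.castSucc_injective _ (h.trans hu₀.symm)
            rw [hw] at hsc
            have hxu : x = u₀ := sameCycle_fixed hfix hsc
            have := (hR'.1 x hx).1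
            rw [Equiv.Perm.mem_support, hxu] at this
            exact this hfix
          exact ⟨this, this⟩
        obtain ⟨hfam, -⟩ := assembleA (a₁ := u) (a₂ := u) (fun w h _ => hptC1 w h)
          (Finset.Subset.refl R') hR' hav
        refine ⟨R'.map Fin.castSuccEmb, hfam, ?_⟩
        rw [Finset.card_map]
        have hcard2 : ({t, u} : Finset (Fin (n+1))).card ≤ 2 := Finset.card_insert_le _ _ |>.trans (by simp)
        omega
      · -- C1b : cycle of t shrinks by one
        have hu_mem : u₀ ∈ π'.support := by
          rw [Equiv.Perm.mem_support]
          intro hcon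
          apply h2t
          have h3 := spec_u
          rw [hcon, hu₀] at h3
          rw [← h3, hπu]
        have hsupp : π.support.card ≤ π'.support.card + ({t} : Finset (Fin (n+1))).card := by
          apply supp_le
          intro z hz hzD
          simp only [Finset.mem_singleton] at hzD
          obtain ⟨y, hy⟩ := Fin.eq_castSucc_of_ne_last hzD
          by_cases hyu : y = u₀
          · exact ⟨y, hy, by rw [hyu]; exact hu_mem⟩
          · refine ⟨y, hy, Equiv.Perm.mem_support.mpr ?_⟩
            intro hcon
            apply Equiv.Perm.mem_support.mp hz
            have hyu' : y.castSucc ≠ u := by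
              intro h; exact hyu (Fin.castSucc_injective _ (h.trans hu₀.symm))
            have := hptC1 y hyu'
            rw [hcon, hy] at this
            exact this.symm
        set Rbad := R'.filter (fun x => π'.SameCycle x u₀) with hRbad
        have hbadcard : Rbad.card ≤ 1 := by
          apply Finset.card_le_one.mpr
          intro a ha b hb
          rw [hRbad, Finset.mem_filter] at ha hb
          by_contra hab
          exact hR'.2.1 a ha.1 b hb.1 hab (ha.2.trans hb.2.symm)
        have hsub : R' \ Rbad ⊆ R' := Finset.sdiff_subset
        have hav : ∀ x ∈ R' \ Rbad, ∀ w, π'.SameCycle x w → w.castSucc ≠ u ∧ w.castSucc ≠ u := by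
          intro x hx w hsc
          rw [Finset.mem_sdiff, hRbad, Finset.mem_filter] at hx
          have : w.castSucc ≠ u := by
            intro h
            have hw : w = u₀ := Fin.castSucc_injective _ (h.trans hu₀.symm)
            rw [hw] at hsc
            exact hx.2 ⟨hx.1, hsc⟩
          exact ⟨this, this⟩
        obtain ⟨hfam, -⟩ := assembleA (a₁ := u) (a₂ := u) (fun w h _ => hptC1 w h)
          hsub hR' hav
        refine ⟨(R' \ Rbad).map Fin.castSuccEmb, hfam, ?_⟩
        rw [Finset.card_map]
        have h1 : (R' \ Rbad).card = R'.card - Rbad.card := Finset.card_sdiff_of_subset (Finset.filter_subset _ _)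
        have h2 : Rbad.card ≤ R'.card := Finset.card_le_card (Finset.filter_subset _ _)
        simp only [Finset.card_singleton] at hsupp
        omega
    · push_neg at hvtu
      obtain ⟨hvt, hvu⟩ := hvtu
      obtain ⟨v₀, hv₀⟩ : ∃ y : Fin n, y.castSucc = v := Fin.eq_castSucc_of_ne_last hvt
      have huv₀ : u₀ ≠ v₀ := fun h => hvu (by rw [← hu₀, ← hv₀, h])
      have spec_v : (π' v₀).castSucc = π t := by rw [spec, hv₀, if_pos rfl, if_neg h0]
      have spec_u : (π' u₀).castSucc = π v := by
        have hcond : ¬ (u₀.castSucc = v) := by rw [hu₀]; exact fun hh => hvu hh.symm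
        rw [spec, if_neg hcond, hu₀, if_pos rfl]
      by_cases hsc : π.SameCycle t v
      · -- C2b : split cases
        by_cases htv : π t = v <;> by_cases hvu2 : π v = u
        · -- 2b-I : 3-cycle, loss 3
          have hπu : π u = t := by rw [hudef]; exact Equiv.Perm.apply_inv_self π t
          have fix_u : π' u₀ = u₀ := Fin.castSucc_injective _ (by rw [spec_u, hvu2, hu₀])
          have fix_v : π' v₀ = v₀ := Fin.castSucc_injective _ (by rw [spec_v, htv, hv₀])
          have htm : t ∉ ({v, u} : Finset (Fin (n+1))) := by
            simp only [Finset.mem_insert, Finset.mem_singleton]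
            push_neg
            exact ⟨fun h => hvt h.symm, fun h => hut h.symm⟩
          have hvm : v ∉ ({u} : Finset (Fin (n+1))) := by
            simp only [Finset.mem_singleton]; exact hvu
          have hclosed : ∀ w ∈ ({t, v, u} : Finset (Fin (n+1))), π w ∈ ({t, v, u} : Finset (Fin (n+1))) := by
            intro w hw
            simp only [Finset.mem_insert, Finset.mem_singleton] at hw ⊢
            rcases hw with rfl | rfl | rfl
            · right; left; exact htv
            · right; right; exact hvu2
            · left; exact hπu
          have hcyc_t : (π.cycleOf t).support = {t, v, u} := by
            ext z
            rw [Equiv.Perm.mem_support_cycleOf_iff]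
            constructor
            · rintro ⟨hsc', _⟩
              exact invariant_closed hclosed t (Finset.mem_insert_self _ _) z hsc'
            · intro hz
              refine ⟨?_, Equiv.Perm.mem_support.mpr h0⟩
              simp only [Finset.mem_insert, Finset.mem_singleton] at hz
              rcases hz with rfl | rfl | rfl
              · exact Equiv.Perm.SameCycle.refl _ _
              · exact ⟨1, by rw [zpow_one, htv]⟩
              · refine ⟨2, ?_⟩
                have h2 : (π ^ (2:ℤ)) t = π (π t) := by
                  rw [show (2:ℤ) = 1 + 1 by norm_num, zpow_add, zpow_one, Equiv.Perm.mul_apply]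
                rw [h2, htv, hvu2]
          have hcard3 : (π.cycleOf t).support.card = 3 := by
            rw [hcyc_t, Finset.card_insert_of_notMem htm, Finset.card_insert_of_notMem hvm,
              Finset.card_singleton]
          have hsupp : π.support.card ≤ π'.support.card + ({t, v, u} : Finset (Fin (n+1))).card := by
            apply supp_le
            intro z hz hzD
            simp only [Finset.mem_insert, Finset.mem_singleton, not_or] at hzD
            obtain ⟨hzt, hzv, hzu⟩ := hzD
            obtain ⟨y, hy⟩ := Fin.eq_castSucc_of_ne_last hzt
            refine ⟨y, hy, Equiv.Perm.mem_support.mpr ?_⟩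
            intro hcon
            apply Equiv.Perm.mem_support.mp hz
            have := hpt_uv y (by rw [hy]; exact hzu) (by rw [hy]; exact hzv)
            rw [hcon, hy] at this
            exact this.symm
          have hav : ∀ x ∈ R', ∀ w, π'.SameCycle x w → w.castSucc ≠ u ∧ w.castSucc ≠ v := by
            intro x hx w hsc2
            have hxsupp := (hR'.1 x hx).1
            constructor
            · intro h
              have hw : w = u₀ := Fin.castSucc_injective _ (h.trans hu₀.symm)
              rw [hw] at hsc2
              have hxu : x = u₀ := sameCycle_fixed fix_u hsc2
              rw [Equiv.Perm.mem_support, hxu] at hxsupp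
              exact hxsupp fix_u
            · intro h
              have hw : w = v₀ := Fin.castSucc_injective _ (h.trans hv₀.symm)
              rw [hw] at hsc2
              have hxv : x = v₀ := sameCycle_fixed fix_v hsc2
              rw [Equiv.Perm.mem_support, hxv] at hxsupp
              exact hxsupp fix_v
          have htdisj : ∀ x ∈ R', ¬ π.SameCycle t x.castSucc := by
            intro x hx hsc2
            have hxS3 := invariant_closed hclosed t (Finset.mem_insert_self _ _) _ hsc2
            have hxsupp := (hR'.1 x hx).1
            simp only [Finset.mem_insert, Finset.mem_singleton] at hxS3
            rcases hxS3 with h | h | h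
            · exact hne x h
            · have hxv : x = v₀ := Fin.castSucc_injective _ (h.trans hv₀.symm)
              rw [Equiv.Perm.mem_support, hxv] at hxsupp
              exact hxsupp fix_v
            · have hxu : x = u₀ := Fin.castSucc_injective _ (h.trans hu₀.symm)
              rw [Equiv.Perm.mem_support, hxu] at hxsupp
              exact hxsupp fix_u
          obtain ⟨hfam, hcard⟩ := assembleB hpt_uv (Finset.Subset.refl R') hR' hav t hne
            (Equiv.Perm.mem_support.mpr h0) (by rw [hcard3]; exact ⟨1, by norm_num⟩)
            (by rw [hcard3]) htdisj
            (by rw [hcard3]; have := hR'.2.2; omega)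
          refine ⟨insert t (R'.map Fin.castSuccEmb), hfam, ?_⟩
          rw [hcard]
          have hc3 : ({t, v, u} : Finset (Fin (n+1))).card = 3 := by
            rw [Finset.card_insert_of_notMem htm, Finset.card_insert_of_notMem hvm,
              Finset.card_singleton]
          omega
        · -- 2b-II : π t = v, π v ≠ u
          have hπu : π u = t := by rw [hudef]; exact Equiv.Perm.apply_inv_self π t
          have htu : π.SameCycle t u := ⟨-1, by rw [zpow_neg_one, hudef]⟩
          have fix_v : π' v₀ = v₀ := Fin.castSucc_injective _ (by rw [spec_v, htv, hv₀])
          have hπv_ne_v : π v ≠ v := fun h => hvt ((π.injective (htv.trans h.symm)).symm)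
          have hu_mem : u₀ ∈ π'.support := by
            rw [Equiv.Perm.mem_support]
            intro hcon
            apply hvu2
            rw [← spec_u, hcon, hu₀]
          have hptK : ∀ w : Fin n, w ∉ ({u₀, v₀} : Finset (Fin n)) →
              (π' w).castSucc = π w.castSucc := by
            intro w hw
            simp only [Finset.mem_insert, Finset.mem_singleton, not_or] at hw
            apply hpt_uv
            · intro h; exact hw.1 (Fin.castSucc_injective _ (h.trans hu₀.symm))
            · intro h; exact hw.2 (Fin.castSucc_injective _ (h.trans hv₀.symm))
          have hsupp : π.support.card ≤ π'.support.card + ({t, v} : Finset (Fin (n+1))).card := by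
            apply supp_le
            intro z hz hzD
            simp only [Finset.mem_insert, Finset.mem_singleton, not_or] at hzD
            obtain ⟨hzt, hzv⟩ := hzD
            obtain ⟨y, hy⟩ := Fin.eq_castSucc_of_ne_last hzt
            by_cases hyu : y = u₀
            · exact ⟨y, hy, by rw [hyu]; exact hu_mem⟩
            · refine ⟨y, hy, Equiv.Perm.mem_support.mpr ?_⟩
              intro hcon
              apply Equiv.Perm.mem_support.mp hz
              have := hpt_uv y (fun h => hyu (Fin.castSucc_injective _ (h.trans hu₀.symm)))
                (by rw [hy]; exact hzv)
              rw [hcon, hy] at this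
              exact this.symm
          set Tset := Finset.univ.filter
            (fun z : Fin n => π.SameCycle t z.castSucc ∧ z.castSucc ≠ v) with hTdef
          have hu₀T : u₀ ∈ Tset := by
            rw [hTdef, Finset.mem_filter]
            exact ⟨Finset.mem_univ _, by rw [hu₀]; exact htu, by rw [hu₀]; exact fun h => hvu h.symm⟩
          have hinv : ∀ w ∈ Tset, π' w ∈ Tset := by
            intro w hw
            rw [hTdef, Finset.mem_filter] at hw ⊢
            obtain ⟨-, hwsc, hwv⟩ := hw
            refine ⟨Finset.mem_univ _, ?_⟩
            by_cases hwu : w = u₀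
            · rw [hwu, spec_u]
              constructor
              · exact hsc.trans ⟨1, by rw [zpow_one]⟩
              · exact hπv_ne_v
            · rw [hpt_uv w (fun h => hwu (Fin.castSucc_injective _ (h.trans hu₀.symm))) hwv]
              constructor
              · exact hwsc.trans ⟨1, by rw [zpow_one]⟩
              · intro h
                exact hne w (π.injective (h.trans htv.symm))
          have horb : (π'.cycleOf u₀).support = Tset := by
            ext z
            rw [Equiv.Perm.mem_support_cycleOf_iff]
            constructor
            · rintro ⟨hsc', -⟩
              exact invariant_closed hinv u₀ hu₀T z hsc'
            · intro hz
              rw [hTdef, Finset.mem_filter] at hz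
              obtain ⟨-, hzsc, hzv⟩ := hz
              refine ⟨?_, hu_mem⟩
              have hzu : π.SameCycle z.castSucc u := hzsc.symm.trans htu
              obtain ⟨i, -, hi⟩ := hzu.exists_pow_eq'
              obtain ⟨k, hk, hsck, -⟩ := hit_lemma π' π {u₀, v₀} hptK z i u₀ (by simp)
                (by rw [hi, hu₀])
              rcases Finset.mem_insert.mp hk with rfl | hk2
              · exact hsck.symm
              · exfalso
                rw [Finset.mem_singleton] at hk2
                rw [hk2] at hsck
                exact hzv (by rw [sameCycle_fixed fix_v hsck, hv₀])
          have hmap : Tset.map Fin.castSuccEmb = (π.cycleOf t).support \ {t, v} := by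
            ext z'
            simp only [Finset.mem_map, Finset.mem_sdiff, Finset.mem_insert, Finset.mem_singleton,
              Equiv.Perm.mem_support_cycleOf_iff, Fin.coe_castSuccEmb, hTdef, Finset.mem_filter,
              Finset.mem_univ, true_and, not_or]
            constructor
            · rintro ⟨z, ⟨hzsc, hzv⟩, rfl⟩
              exact ⟨⟨hzsc, Equiv.Perm.mem_support.mpr h0⟩, hne z, hzv⟩
            · rintro ⟨⟨hzsc, -⟩, hzt, hzv⟩
              obtain ⟨z, hz⟩ := Fin.eq_castSucc_of_ne_last hzt
              exact ⟨z, ⟨by rw [hz]; exact hzsc, by rw [hz]; exact hzv⟩, hz⟩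
          have htv_sub : ({t, v} : Finset (Fin (n+1))) ⊆ (π.cycleOf t).support := by
            intro z hz
            simp only [Finset.mem_insert, Finset.mem_singleton] at hz
            rw [Equiv.Perm.mem_support_cycleOf_iff]
            rcases hz with rfl | rfl
            · exact ⟨Equiv.Perm.SameCycle.refl _ _, Equiv.Perm.mem_support.mpr h0⟩
            · exact ⟨⟨1, by rw [zpow_one, htv]⟩, Equiv.Perm.mem_support.mpr h0⟩
          have hcard_tv : ({t, v} : Finset (Fin (n+1))).card = 2 := by
            rw [Finset.card_insert_of_notMem
              (by simp only [Finset.mem_singleton]; exact fun h => hvt h.symm),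
              Finset.card_singleton]
          have hTcard : Tset.card = (π.cycleOf t).support.card - 2 := by
            calc Tset.card = (Tset.map Fin.castSuccEmb).card := (Finset.card_map _).symm
            _ = ((π.cycleOf t).support \ {t, v}).card := by rw [hmap]
            _ = (π.cycleOf t).support.card - ({t, v} : Finset (Fin (n+1))).card :=
                Finset.card_sdiff_of_subset htv_sub
            _ = (π.cycleOf t).support.card - 2 := by rw [hcard_tv]
          have hL2 : 2 ≤ (π.cycleOf t).support.card := by
            calc 2 = ({t, v} : Finset (Fin (n+1))).card := hcard_tv.symm
            _ ≤ _ := Finset.card_le_card htv_sub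
          set Rbad := R'.filter (fun x => π'.SameCycle x u₀) with hRbad
          have hbadcard : Rbad.card ≤ 1 := by
            apply Finset.card_le_one.mpr
            intro a ha b hb
            rw [hRbad, Finset.mem_filter] at ha hb
            by_contra hab
            exact hR'.2.1 a ha.1 b hb.1 hab (ha.2.trans hb.2.symm)
          rcases Finset.eq_empty_or_nonempty Rbad with hRe | ⟨x, hxbad⟩
          · -- no affected member
            have hav : ∀ x ∈ R', ∀ w, π'.SameCycle x w → w.castSucc ≠ u ∧ w.castSucc ≠ v := by
              intro x hx w hsc2
              constructor
              · intro h
                have hw : w = u₀ := Fin.castSucc_injective _ (h.trans hu₀.symm)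
                rw [hw] at hsc2
                have : x ∈ Rbad := by rw [hRbad, Finset.mem_filter]; exact ⟨hx, hsc2⟩
                rw [hRe] at this
                exact absurd this (Finset.notMem_empty x)
              · intro h
                have hw : w = v₀ := Fin.castSucc_injective _ (h.trans hv₀.symm)
                rw [hw] at hsc2
                have hxv : x = v₀ := sameCycle_fixed fix_v hsc2
                have hxsupp := (hR'.1 x hx).1
                rw [Equiv.Perm.mem_support, hxv] at hxsupp
                exact hxsupp fix_v
            obtain ⟨hfam, -⟩ := assembleA hpt_uv (Finset.Subset.refl R') hR' hav
            refine ⟨R'.map Fin.castSuccEmb, hfam, ?_⟩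
            rw [Finset.card_map]
            rw [hcard_tv] at hsupp
            omega
          · -- one affected member x : replace it by the cycle of t
            have hxR : x ∈ R' := Finset.filter_subset _ _ hxbad
            have hxu : π'.SameCycle x u₀ := (Finset.mem_filter.mp hxbad).2
            have hbad_eq : ∀ y ∈ Rbad, y = x := fun y hy =>
              Finset.card_le_one.mp hbadcard y hy x hxbad
            have hcx : (π'.cycleOf x).support.card = Tset.card := by
              rw [hxu.cycleOf_eq, horb]
            have hLcx : (π.cycleOf t).support.card = (π'.cycleOf x).support.card + 2 := by
              rw [hcx, hTcard]
              omega
            have hodd := (hR'.1 x hxR).2.1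
            have h3c := (hR'.1 x hxR).2.2
            have hav : ∀ x' ∈ R'.erase x, ∀ w, π'.SameCycle x' w →
                w.castSucc ≠ u ∧ w.castSucc ≠ v := by
              intro x' hx' w hsc2
              obtain ⟨hx'ne, hx'R⟩ := Finset.mem_erase.mp hx'
              constructor
              · intro h
                have hw : w = u₀ := Fin.castSucc_injective _ (h.trans hu₀.symm)
                rw [hw] at hsc2
                have : x' ∈ Rbad := by rw [hRbad, Finset.mem_filter]; exact ⟨hx'R, hsc2⟩
                exact hx'ne (hbad_eq x' this)
              · intro h
                have hw : w = v₀ := Fin.castSucc_injective _ (h.trans hv₀.symm)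
                rw [hw] at hsc2
                have hxv : x' = v₀ := sameCycle_fixed fix_v hsc2
                have hxsupp := (hR'.1 x' hx'R).1
                rw [Equiv.Perm.mem_support, hxv] at hxsupp
                exact hxsupp fix_v
            have htdisj : ∀ x' ∈ R'.erase x, ¬ π.SameCycle t x'.castSucc := by
              intro x' hx' hsc2
              obtain ⟨hx'ne, hx'R⟩ := Finset.mem_erase.mp hx'
              have hx'v : x'.castSucc ≠ v := by
                intro h
                have hxv : x' = v₀ := Fin.castSucc_injective _ (h.trans hv₀.symm)
                have hxsupp := (hR'.1 x' hx'R).1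
                rw [Equiv.Perm.mem_support, hxv] at hxsupp
                exact hxsupp fix_v
              have hx'T : x' ∈ Tset := by
                rw [hTdef, Finset.mem_filter]
                exact ⟨Finset.mem_univ _, hsc2, hx'v⟩
              rw [← horb, Equiv.Perm.mem_support_cycleOf_iff] at hx'T
              have : x' ∈ Rbad := by
                rw [hRbad, Finset.mem_filter]
                exact ⟨hx'R, hx'T.1.symm⟩
              exact hx'ne (hbad_eq x' this)
            have hsum_erase : (∑ y ∈ R'.erase x, ((π'.cycleOf y).support.card - 1))
                + ((π'.cycleOf x).support.card - 1)
                = ∑ y ∈ R', ((π'.cycleOf y).support.card - 1) :=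
              Finset.sum_erase_add _ _ hxR
            obtain ⟨hfam, hcard⟩ := assembleB hpt_uv (Finset.erase_subset x R') hR' hav t hne
              (Equiv.Perm.mem_support.mpr h0)
              (by rw [hLcx]; obtain ⟨c, hc⟩ := hodd; exact ⟨c+1, by omega⟩)
              (by omega)
              htdisj
              (by have := hR'.2.2; omega)
            refine ⟨insert t ((R'.erase x).map Fin.castSuccEmb), hfam, ?_⟩
            rw [hcard, Finset.card_erase_of_mem hxR]
            rw [hcard_tv] at hsupp
            have hR'pos : 1 ≤ R'.card := Finset.card_pos.mpr ⟨x, hxR⟩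
            omega
        · -- 2b-III : π v = u, π t ≠ v
          have hπu : π u = t := by rw [hudef]; exact Equiv.Perm.apply_inv_self π t
          have htu : π.SameCycle t u := ⟨-1, by rw [zpow_neg_one, hudef]⟩
          have fix_u : π' u₀ = u₀ := Fin.castSucc_injective _ (by rw [spec_u, hvu2, hu₀])
          have hπt_ne_u : π t ≠ u := by
            intro h
            have hcl : ∀ w ∈ ({t, u} : Finset (Fin (n+1))), π w ∈ ({t, u} : Finset (Fin (n+1))) := by
              intro w hw
              simp only [Finset.mem_insert, Finset.mem_singleton] at hw ⊢
              rcases hw with rfl | rfl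
              · right; exact h
              · left; exact hπu
            have hv2 := invariant_closed hcl t (Finset.mem_insert_self _ _) v hsc
            simp only [Finset.mem_insert, Finset.mem_singleton] at hv2
            rcases hv2 with h2 | h2
            · exact hvt h2
            · exact hvu h2
          have hv_mem : v₀ ∈ π'.support := by
            rw [Equiv.Perm.mem_support]
            intro hcon
            apply htv
            rw [← spec_v, hcon, hv₀]
          have hptK : ∀ w : Fin n, w ∉ ({u₀, v₀} : Finset (Fin n)) →
              (π' w).castSucc = π w.castSucc := by
            intro w hw
            simp only [Finset.mem_insert, Finset.mem_singleton, not_or] at hw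
            apply hpt_uv
            · intro h; exact hw.1 (Fin.castSucc_injective _ (h.trans hu₀.symm))
            · intro h; exact hw.2 (Fin.castSucc_injective _ (h.trans hv₀.symm))
          have hsupp : π.support.card ≤ π'.support.card + ({t, u} : Finset (Fin (n+1))).card := by
            apply supp_le
            intro z hz hzD
            simp only [Finset.mem_insert, Finset.mem_singleton, not_or] at hzD
            obtain ⟨hzt, hzu⟩ := hzD
            obtain ⟨y, hy⟩ := Fin.eq_castSucc_of_ne_last hzt
            by_cases hyv : y = v₀
            · exact ⟨y, hy, by rw [hyv]; exact hv_mem⟩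
            · refine ⟨y, hy, Equiv.Perm.mem_support.mpr ?_⟩
              intro hcon
              apply Equiv.Perm.mem_support.mp hz
              have := hpt_uv y (by rw [hy]; exact hzu)
                (fun h => hyv (Fin.castSucc_injective _ (h.trans hv₀.symm)))
              rw [hcon, hy] at this
              exact this.symm
          set Tset := Finset.univ.filter
            (fun z : Fin n => π.SameCycle t z.castSucc ∧ z.castSucc ≠ u) with hTdef
          have hv₀T : v₀ ∈ Tset := by
            rw [hTdef, Finset.mem_filter]
            exact ⟨Finset.mem_univ _, by rw [hv₀]; exact hsc, by rw [hv₀]; exact hvu⟩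
          have hinv : ∀ w ∈ Tset, π' w ∈ Tset := by
            intro w hw
            rw [hTdef, Finset.mem_filter] at hw ⊢
            obtain ⟨-, hwsc, hwu⟩ := hw
            refine ⟨Finset.mem_univ _, ?_⟩
            by_cases hwv : w = v₀
            · rw [hwv, spec_v]
              constructor
              · exact ⟨1, by rw [zpow_one]⟩
              · exact hπt_ne_u
            · rw [hpt_uv w hwu (fun h => hwv (Fin.castSucc_injective _ (h.trans hv₀.symm)))]
              constructor
              · exact hwsc.trans ⟨1, by rw [zpow_one]⟩
              · intro h
                apply hwv
                apply Fin.castSucc_injective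
                rw [hv₀]
                exact π.injective (h.trans hvu2.symm)
          have horb : (π'.cycleOf v₀).support = Tset := by
            ext z
            rw [Equiv.Perm.mem_support_cycleOf_iff]
            constructor
            · rintro ⟨hsc', -⟩
              exact invariant_closed hinv v₀ hv₀T z hsc'
            · intro hz
              rw [hTdef, Finset.mem_filter] at hz
              obtain ⟨-, hzsc, hzu⟩ := hz
              refine ⟨?_, hv_mem⟩
              have hzv : π.SameCycle z.castSucc v := hzsc.symm.trans hsc
              obtain ⟨i, -, hi⟩ := hzv.exists_pow_eq'
              obtain ⟨k, hk, hsck, -⟩ := hit_lemma π' π {u₀, v₀} hptK z i v₀ (by simp)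
                (by rw [hi, hv₀])
              rcases Finset.mem_insert.mp hk with rfl | hk2
              · exfalso
                exact hzu (by rw [sameCycle_fixed fix_u hsck, hu₀])
              · rw [Finset.mem_singleton] at hk2
                rw [hk2] at hsck
                exact hsck.symm
          have hmap : Tset.map Fin.castSuccEmb = (π.cycleOf t).support \ {t, u} := by
            ext z'
            simp only [Finset.mem_map, Finset.mem_sdiff, Finset.mem_insert, Finset.mem_singleton,
              Equiv.Perm.mem_support_cycleOf_iff, Fin.coe_castSuccEmb, hTdef, Finset.mem_filter,
              Finset.mem_univ, true_and, not_or]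
            constructor
            · rintro ⟨z, ⟨hzsc, hzu⟩, rfl⟩
              exact ⟨⟨hzsc, Equiv.Perm.mem_support.mpr h0⟩, hne z, hzu⟩
            · rintro ⟨⟨hzsc, -⟩, hzt, hzu⟩
              obtain ⟨z, hz⟩ := Fin.eq_castSucc_of_ne_last hzt
              exact ⟨z, ⟨by rw [hz]; exact hzsc, by rw [hz]; exact hzu⟩, hz⟩
          have htu_sub : ({t, u} : Finset (Fin (n+1))) ⊆ (π.cycleOf t).support := by
            intro z hz
            simp only [Finset.mem_insert, Finset.mem_singleton] at hz
            rw [Equiv.Perm.mem_support_cycleOf_iff]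
            rcases hz with rfl | rfl
            · exact ⟨Equiv.Perm.SameCycle.refl _ _, Equiv.Perm.mem_support.mpr h0⟩
            · exact ⟨htu, Equiv.Perm.mem_support.mpr h0⟩
          have hcard_tu : ({t, u} : Finset (Fin (n+1))).card = 2 := by
            rw [Finset.card_insert_of_notMem
              (by simp only [Finset.mem_singleton]; exact fun h => hut h.symm),
              Finset.card_singleton]
          have hTcard : Tset.card = (π.cycleOf t).support.card - 2 := by
            calc Tset.card = (Tset.map Fin.castSuccEmb).card := (Finset.card_map _).symm
            _ = ((π.cycleOf t).support \ {t, u}).card := by rw [hmap]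
            _ = (π.cycleOf t).support.card - ({t, u} : Finset (Fin (n+1))).card :=
                Finset.card_sdiff_of_subset htu_sub
            _ = (π.cycleOf t).support.card - 2 := by rw [hcard_tu]
          have hL2 : 2 ≤ (π.cycleOf t).support.card := by
            calc 2 = ({t, u} : Finset (Fin (n+1))).card := hcard_tu.symm
            _ ≤ _ := Finset.card_le_card htu_sub
          set Rbad := R'.filter (fun x => π'.SameCycle x v₀) with hRbad
          have hbadcard : Rbad.card ≤ 1 := by
            apply Finset.card_le_one.mpr
            intro a ha b hb
            rw [hRbad, Finset.mem_filter] at ha hb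
            by_contra hab
            exact hR'.2.1 a ha.1 b hb.1 hab (ha.2.trans hb.2.symm)
          rcases Finset.eq_empty_or_nonempty Rbad with hRe | ⟨x, hxbad⟩
          · have hav : ∀ x ∈ R', ∀ w, π'.SameCycle x w → w.castSucc ≠ u ∧ w.castSucc ≠ v := by
              intro x hx w hsc2
              constructor
              · intro h
                have hw : w = u₀ := Fin.castSucc_injective _ (h.trans hu₀.symm)
                rw [hw] at hsc2
                have hxu : x = u₀ := sameCycle_fixed fix_u hsc2
                have hxsupp := (hR'.1 x hx).1
                rw [Equiv.Perm.mem_support, hxu] at hxsupp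
                exact hxsupp fix_u
              · intro h
                have hw : w = v₀ := Fin.castSucc_injective _ (h.trans hv₀.symm)
                rw [hw] at hsc2
                have : x ∈ Rbad := by rw [hRbad, Finset.mem_filter]; exact ⟨hx, hsc2⟩
                rw [hRe] at this
                exact absurd this (Finset.notMem_empty x)
            obtain ⟨hfam, -⟩ := assembleA hpt_uv (Finset.Subset.refl R') hR' hav
            refine ⟨R'.map Fin.castSuccEmb, hfam, ?_⟩
            rw [Finset.card_map]
            rw [hcard_tu] at hsupp
            omega
          · have hxR : x ∈ R' := Finset.filter_subset _ _ hxbad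
            have hxv : π'.SameCycle x v₀ := (Finset.mem_filter.mp hxbad).2
            have hbad_eq : ∀ y ∈ Rbad, y = x := fun y hy =>
              Finset.card_le_one.mp hbadcard y hy x hxbad
            have hcx : (π'.cycleOf x).support.card = Tset.card := by
              rw [hxv.cycleOf_eq, horb]
            have hLcx : (π.cycleOf t).support.card = (π'.cycleOf x).support.card + 2 := by
              rw [hcx, hTcard]
              omega
            have hodd := (hR'.1 x hxR).2.1
            have h3c := (hR'.1 x hxR).2.2
            have hav : ∀ x' ∈ R'.erase x, ∀ w, π'.SameCycle x' w →
                w.castSucc ≠ u ∧ w.castSucc ≠ v := by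
              intro x' hx' w hsc2
              obtain ⟨hx'ne, hx'R⟩ := Finset.mem_erase.mp hx'
              constructor
              · intro h
                have hw : w = u₀ := Fin.castSucc_injective _ (h.trans hu₀.symm)
                rw [hw] at hsc2
                have hxu : x' = u₀ := sameCycle_fixed fix_u hsc2
                have hxsupp := (hR'.1 x' hx'R).1
                rw [Equiv.Perm.mem_support, hxu] at hxsupp
                exact hxsupp fix_u
              · intro h
                have hw : w = v₀ := Fin.castSucc_injective _ (h.trans hv₀.symm)
                rw [hw] at hsc2
                have : x' ∈ Rbad := by rw [hRbad, Finset.mem_filter]; exact ⟨hx'R, hsc2⟩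
                exact hx'ne (hbad_eq x' this)
            have htdisj : ∀ x' ∈ R'.erase x, ¬ π.SameCycle t x'.castSucc := by
              intro x' hx' hsc2
              obtain ⟨hx'ne, hx'R⟩ := Finset.mem_erase.mp hx'
              have hx'u : x'.castSucc ≠ u := by
                intro h
                have hxu : x' = u₀ := Fin.castSucc_injective _ (h.trans hu₀.symm)
                have hxsupp := (hR'.1 x' hx'R).1
                rw [Equiv.Perm.mem_support, hxu] at hxsupp
                exact hxsupp fix_u
              have hx'T : x' ∈ Tset := by
                rw [hTdef, Finset.mem_filter]
                exact ⟨Finset.mem_univ _, hsc2, hx'u⟩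
              rw [← horb, Equiv.Perm.mem_support_cycleOf_iff] at hx'T
              have : x' ∈ Rbad := by
                rw [hRbad, Finset.mem_filter]
                exact ⟨hx'R, hx'T.1.symm⟩
              exact hx'ne (hbad_eq x' this)
            obtain ⟨hfam, hcard⟩ := assembleB hpt_uv (Finset.erase_subset x R') hR' hav t hne
              (Equiv.Perm.mem_support.mpr h0)
              (by rw [hLcx]; obtain ⟨c, hc⟩ := hodd; exact ⟨c+1, by omega⟩)
              (by omega)
              htdisj
              (by
                have := hR'.2.2
                have hsum_erase : (∑ y ∈ R'.erase x, ((π'.cycleOf y).support.card - 1))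
                    + ((π'.cycleOf x).support.card - 1)
                    = ∑ y ∈ R', ((π'.cycleOf y).support.card - 1) :=
                  Finset.sum_erase_add _ _ hxR
                omega)
            refine ⟨insert t ((R'.erase x).map Fin.castSuccEmb), hfam, ?_⟩
            rw [hcard, Finset.card_erase_of_mem hxR]
            rw [hcard_tu] at hsupp
            have hR'pos : 1 ≤ R'.card := Finset.card_pos.mpr ⟨x, hxR⟩
            omega
        · -- 2b-IV : generic split
          have hπu : π u = t := by rw [hudef]; exact Equiv.Perm.apply_inv_self π t
          have htu : π.SameCycle t u := ⟨-1, by rw [zpow_neg_one, hudef]⟩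
          have hu_mem : u₀ ∈ π'.support := by
            rw [Equiv.Perm.mem_support]
            intro hcon
            apply hvu2
            rw [← spec_u, hcon, hu₀]
          have hv_mem : v₀ ∈ π'.support := by
            rw [Equiv.Perm.mem_support]
            intro hcon
            apply htv
            rw [← spec_v, hcon, hv₀]
          have hptK : ∀ w : Fin n, w ∉ ({u₀, v₀} : Finset (Fin n)) →
              (π' w).castSucc = π w.castSucc := by
            intro w hw
            simp only [Finset.mem_insert, Finset.mem_singleton, not_or] at hw
            apply hpt_uv
            · intro h; exact hw.1 (Fin.castSucc_injective _ (h.trans hu₀.symm))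
            · intro h; exact hw.2 (Fin.castSucc_injective _ (h.trans hv₀.symm))
          have hsupp : π.support.card ≤ π'.support.card + ({t} : Finset (Fin (n+1))).card := by
            apply supp_le
            intro z hz hzD
            simp only [Finset.mem_singleton] at hzD
            obtain ⟨y, hy⟩ := Fin.eq_castSucc_of_ne_last hzD
            by_cases hyu : y = u₀
            · exact ⟨y, hy, by rw [hyu]; exact hu_mem⟩
            by_cases hyv : y = v₀
            · exact ⟨y, hy, by rw [hyv]; exact hv_mem⟩
            refine ⟨y, hy, Equiv.Perm.mem_support.mpr ?_⟩
            intro hcon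
            apply Equiv.Perm.mem_support.mp hz
            have := hpt_uv y (fun h => hyu (Fin.castSucc_injective _ (h.trans hu₀.symm)))
              (fun h => hyv (Fin.castSucc_injective _ (h.trans hv₀.symm)))
            rw [hcon, hy] at this
            exact this.symm
          set Tall := Finset.univ.filter (fun z : Fin n => π.SameCycle t z.castSucc) with hTdef
          have hu₀T : u₀ ∈ Tall := by
            rw [hTdef, Finset.mem_filter]
            exact ⟨Finset.mem_univ _, by rw [hu₀]; exact htu⟩
          have hv₀T : v₀ ∈ Tall := by
            rw [hTdef, Finset.mem_filter]
            exact ⟨Finset.mem_univ _, by rw [hv₀]; exact hsc⟩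
          have hinv : ∀ w ∈ Tall, π' w ∈ Tall := by
            intro w hw
            rw [hTdef, Finset.mem_filter] at hw ⊢
            obtain ⟨-, hwsc⟩ := hw
            refine ⟨Finset.mem_univ _, ?_⟩
            by_cases hwu : w = u₀
            · rw [hwu, spec_u]
              exact hsc.trans ⟨1, by rw [zpow_one]⟩
            by_cases hwv : w = v₀
            · rw [hwv, spec_v]
              exact ⟨1, by rw [zpow_one]⟩
            rw [hpt_uv w (fun h => hwu (Fin.castSucc_injective _ (h.trans hu₀.symm)))
              (fun h => hwv (Fin.castSucc_injective _ (h.trans hv₀.symm)))]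
            exact hwsc.trans ⟨1, by rw [zpow_one]⟩
          have hcover : ∀ z ∈ Tall, π'.SameCycle z u₀ ∨ π'.SameCycle z v₀ := by
            intro z hz
            rw [hTdef, Finset.mem_filter] at hz
            have hzu : π.SameCycle z.castSucc u := hz.2.symm.trans htu
            obtain ⟨i, -, hi⟩ := hzu.exists_pow_eq'
            obtain ⟨k, hk, hsck, -⟩ := hit_lemma π' π {u₀, v₀} hptK z i u₀ (by simp)
              (by rw [hi, hu₀])
            rcases Finset.mem_insert.mp hk with rfl | hk2
            · exact Or.inl hsck
            · rw [Finset.mem_singleton] at hk2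
              rw [hk2] at hsck
              exact Or.inr hsck
          have hmap : Tall.map Fin.castSuccEmb = (π.cycleOf t).support.erase t := by
            ext z'
            simp only [Finset.mem_map, Finset.mem_erase,
              Equiv.Perm.mem_support_cycleOf_iff, Fin.coe_castSuccEmb, hTdef, Finset.mem_filter,
              Finset.mem_univ, true_and]
            constructor
            · rintro ⟨z, hzsc, rfl⟩
              exact ⟨hne z, hzsc, Equiv.Perm.mem_support.mpr h0⟩
            · rintro ⟨hzt, hzsc, -⟩
              obtain ⟨z, hz⟩ := Fin.eq_castSucc_of_ne_last hzt
              exact ⟨z, by rw [hz]; exact hzsc, hz⟩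
          have htmem : t ∈ (π.cycleOf t).support :=
            Equiv.Perm.mem_support_cycleOf_iff.mpr
              ⟨Equiv.Perm.SameCycle.refl _ _, Equiv.Perm.mem_support.mpr h0⟩
          have hTcard : Tall.card = (π.cycleOf t).support.card - 1 := by
            calc Tall.card = (Tall.map Fin.castSuccEmb).card := (Finset.card_map _).symm
            _ = ((π.cycleOf t).support.erase t).card := by rw [hmap]
            _ = (π.cycleOf t).support.card - 1 := Finset.card_erase_of_mem htmem
          have hL1 : 1 ≤ (π.cycleOf t).support.card := Finset.card_pos.mpr ⟨t, htmem⟩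
          set Rbad := R'.filter (fun x => π'.SameCycle x u₀ ∨ π'.SameCycle x v₀) with hRbad
          have hbad_mem : ∀ x ∈ R', (π'.SameCycle x u₀ ∨ π'.SameCycle x v₀) → x ∈ Rbad := by
            intro x hx h
            rw [hRbad, Finset.mem_filter]
            exact ⟨hx, h⟩
          have hav : ∀ x ∈ R' \ Rbad, ∀ w, π'.SameCycle x w →
              w.castSucc ≠ u ∧ w.castSucc ≠ v := by
            intro x hx w hsc2
            rw [Finset.mem_sdiff] at hx
            constructor
            · intro h
              have hw : w = u₀ := Fin.castSucc_injective _ (h.trans hu₀.symm)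
              rw [hw] at hsc2
              exact hx.2 (hbad_mem x hx.1 (Or.inl hsc2))
            · intro h
              have hw : w = v₀ := Fin.castSucc_injective _ (h.trans hv₀.symm)
              rw [hw] at hsc2
              exact hx.2 (hbad_mem x hx.1 (Or.inr hsc2))
          have hbad2 : Rbad.card ≤ 2 := by
            have h1 : Rbad ⊆ R'.filter (fun x => π'.SameCycle x u₀) ∪
                R'.filter (fun x => π'.SameCycle x v₀) := by
              intro a ha
              rw [hRbad, Finset.mem_filter] at ha
              rw [Finset.mem_union, Finset.mem_filter, Finset.mem_filter]
              rcases ha.2 with h | h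
              · exact Or.inl ⟨ha.1, h⟩
              · exact Or.inr ⟨ha.1, h⟩
            have hcu : (R'.filter (fun x => π'.SameCycle x u₀)).card ≤ 1 := by
              apply Finset.card_le_one.mpr
              intro a ha b hb
              rw [Finset.mem_filter] at ha hb
              by_contra hab
              exact hR'.2.1 a ha.1 b hb.1 hab (ha.2.trans hb.2.symm)
            have hcv : (R'.filter (fun x => π'.SameCycle x v₀)).card ≤ 1 := by
              apply Finset.card_le_one.mpr
              intro a ha b hb
              rw [Finset.mem_filter] at ha hb
              by_contra hab
              exact hR'.2.1 a ha.1 b hb.1 hab (ha.2.trans hb.2.symm)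
            calc Rbad.card ≤ _ := Finset.card_le_card h1
            _ ≤ _ + _ := Finset.card_union_le _ _
            _ ≤ 2 := by omega
          by_cases hbcase : Rbad.card ≤ 1
          · -- drop at most one member
            obtain ⟨hfam, -⟩ := assembleA hpt_uv (Finset.sdiff_subset) hR' hav
            refine ⟨(R' \ Rbad).map Fin.castSuccEmb, hfam, ?_⟩
            rw [Finset.card_map]
            have h1 : (R' \ Rbad).card = R'.card - Rbad.card :=
              Finset.card_sdiff_of_subset (Finset.filter_subset _ _)
            have h2 : Rbad.card ≤ R'.card := Finset.card_le_card (Finset.filter_subset _ _)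
            simp only [Finset.card_singleton] at hsupp
            omega
          · -- two affected members : replace both by the cycle of t
            have hbcard : Rbad.card = 2 := by omega
            obtain ⟨x1, x2, hne12, hpair⟩ := Finset.card_eq_two.mp hbcard
            have hx1bad : x1 ∈ Rbad := by rw [hpair]; simp
            have hx2bad : x2 ∈ Rbad := by rw [hpair]; simp
            have hx1R : x1 ∈ R' := Finset.filter_subset _ _ hx1bad
            have hx2R : x2 ∈ R' := Finset.filter_subset _ _ hx2bad
            have hx1f := (Finset.mem_filter.mp hx1bad).2
            have hx2f := (Finset.mem_filter.mp hx2bad).2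
            have hnsc12 : ¬ π'.SameCycle x1 x2 := hR'.2.1 x1 hx1R x2 hx2R hne12
            have hnuv : ¬ π'.SameCycle u₀ v₀ := by
              intro h
              apply hnsc12
              have g1 : π'.SameCycle x1 u₀ := by
                rcases hx1f with h1 | h1
                · exact h1
                · exact h1.trans h.symm
              have g2 : π'.SameCycle x2 u₀ := by
                rcases hx2f with h2 | h2
                · exact h2
                · exact h2.trans h.symm
              exact g1.trans g2.symm
            -- Tall is the disjoint union of the two orbits
            have hunion : Tall = (π'.cycleOf u₀).support ∪ (π'.cycleOf v₀).support := by
              ext z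
              rw [Finset.mem_union, Equiv.Perm.mem_support_cycleOf_iff,
                Equiv.Perm.mem_support_cycleOf_iff]
              constructor
              · intro hz
                rcases hcover z hz with h | h
                · exact Or.inl ⟨h.symm, hu_mem⟩
                · exact Or.inr ⟨h.symm, hv_mem⟩
              · rintro (⟨h, -⟩ | ⟨h, -⟩)
                · exact invariant_closed hinv u₀ hu₀T z h
                · exact invariant_closed hinv v₀ hv₀T z h
            have hdisj : Disjoint (π'.cycleOf u₀).support (π'.cycleOf v₀).support := by
              rw [Finset.disjoint_left]
              intro z hz1 hz2
              rw [Equiv.Perm.mem_support_cycleOf_iff] at hz1 hz2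
              exact hnuv (hz1.1.trans hz2.1.symm)
            have hTsum : Tall.card = (π'.cycleOf u₀).support.card
                + (π'.cycleOf v₀).support.card := by
              rw [hunion]
              exact Finset.card_union_of_disjoint hdisj
            -- cycle sizes of x1 x2
            have hcc : (π'.cycleOf x1).support.card + (π'.cycleOf x2).support.card
                = (π'.cycleOf u₀).support.card + (π'.cycleOf v₀).support.card := by
              rcases hx1f with h1 | h1
              · have h2 : π'.SameCycle x2 v₀ := by
                  rcases hx2f with h | h
                  · exact absurd (h1.trans h.symm) hnsc12
                  · exact h
                rw [h1.cycleOf_eq, h2.cycleOf_eq]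
              · have h2 : π'.SameCycle x2 u₀ := by
                  rcases hx2f with h | h
                  · exact h
                  · exact absurd (h1.trans h.symm) hnsc12
                rw [h1.cycleOf_eq, h2.cycleOf_eq]
                omega
            have hodd1 := (hR'.1 x1 hx1R).2.1
            have hodd2 := (hR'.1 x2 hx2R).2.1
            have h3c1 := (hR'.1 x1 hx1R).2.2
            have h3c2 := (hR'.1 x2 hx2R).2.2
            have hLsum : (π.cycleOf t).support.card
                = (π'.cycleOf x1).support.card + (π'.cycleOf x2).support.card + 1 := by
              rw [hcc, ← hTsum, hTcard]
              omega
            have htdisj : ∀ x' ∈ R' \ Rbad, ¬ π.SameCycle t x'.castSucc := by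
              intro x' hx' hsc2
              rw [Finset.mem_sdiff] at hx'
              have hx'T : x' ∈ Tall := by
                rw [hTdef, Finset.mem_filter]
                exact ⟨Finset.mem_univ _, hsc2⟩
              exact hx'.2 (hbad_mem x' hx'.1 (hcover x' hx'T))
            have hsum_split : (∑ y ∈ R' \ Rbad, ((π'.cycleOf y).support.card - 1))
                + (∑ y ∈ Rbad, ((π'.cycleOf y).support.card - 1))
                = ∑ y ∈ R', ((π'.cycleOf y).support.card - 1) :=
              Finset.sum_sdiff (Finset.filter_subset _ _)
            have hsum_pair : (∑ y ∈ Rbad, ((π'.cycleOf y).support.card - 1))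
                = ((π'.cycleOf x1).support.card - 1) + ((π'.cycleOf x2).support.card - 1) := by
              rw [hpair]
              exact Finset.sum_pair hne12
            obtain ⟨hfam, hcard⟩ := assembleB hpt_uv (Finset.sdiff_subset) hR' hav t hne
              (Equiv.Perm.mem_support.mpr h0)
              (by
                rw [hLsum]
                obtain ⟨a, ha⟩ := hodd1
                obtain ⟨b, hb⟩ := hodd2
                exact ⟨a + b + 1, by omega⟩)
              (by omega)
              htdisj
              (by have := hR'.2.2; omega)
            refine ⟨insert t ((R' \ Rbad).map Fin.castSuccEmb), hfam, ?_⟩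
            rw [hcard]
            have h1 : (R' \ Rbad).card = R'.card - Rbad.card :=
              Finset.card_sdiff_of_subset (Finset.filter_subset _ _)
            have h2 : Rbad.card ≤ R'.card := Finset.card_le_card (Finset.filter_subset _ _)
            simp only [Finset.card_singleton] at hsupp
            omega
      · -- C2a : merge
        have hπu : π u = t := by rw [hudef]; exact Equiv.Perm.apply_inv_self π t
        have hπv_ne_u : π v ≠ u := by
          intro h
          apply hsc
          have h1 : π.SameCycle v u := ⟨1, by rw [zpow_one, h]⟩
          have h2 : π.SameCycle u t := ⟨1, by rw [zpow_one, hπu]⟩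
          exact (h1.trans h2).symm
        have hπt_ne_v : π t ≠ v := fun h => hsc ⟨1, by rw [zpow_one, h]⟩
        have hu_mem : u₀ ∈ π'.support := by
          rw [Equiv.Perm.mem_support]
          intro hcon
          apply hπv_ne_u
          rw [← spec_u, hcon, hu₀]
        have hv_mem : v₀ ∈ π'.support := by
          rw [Equiv.Perm.mem_support]
          intro hcon
          apply hπt_ne_v
          rw [← spec_v, hcon, hv₀]
        have hsupp : π.support.card ≤ π'.support.card + ({t} : Finset (Fin (n+1))).card := by
          apply supp_le
          intro z hz hzD
          simp only [Finset.mem_singleton] at hzD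
          obtain ⟨y, hy⟩ := Fin.eq_castSucc_of_ne_last hzD
          by_cases hyu : y = u₀
          · exact ⟨y, hy, by rw [hyu]; exact hu_mem⟩
          by_cases hyv : y = v₀
          · exact ⟨y, hy, by rw [hyv]; exact hv_mem⟩
          refine ⟨y, hy, Equiv.Perm.mem_support.mpr ?_⟩
          intro hcon
          apply Equiv.Perm.mem_support.mp hz
          have := hpt_uv y (fun h => hyu (Fin.castSucc_injective _ (h.trans hu₀.symm)))
            (fun h => hyv (Fin.castSucc_injective _ (h.trans hv₀.symm)))
          rw [hcon, hy] at this
          exact this.symm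
        have huv_sc : π'.SameCycle u₀ v₀ := by
          by_cases hπvv : π v = v
          · have : π' u₀ = v₀ := Fin.castSucc_injective _ (by rw [spec_u, hπvv, hv₀])
            exact ⟨1, by rw [zpow_one, this]⟩
          · have hπvt : π v ≠ t := by
              intro h
              apply hvu
              rw [hudef, ← h, Equiv.Perm.inv_apply_self]
            obtain ⟨p₀, hp₀⟩ := Fin.eq_castSucc_of_ne_last hπvt
            have hsc0 : π.SameCycle v (π v) := ⟨1, by rw [zpow_one]⟩
            have hsc1 : π.SameCycle (π v) v := hsc0.symm
            obtain ⟨i, _, hi⟩ := hsc1.exists_pow_eq'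
            have hptK : ∀ w : Fin n, w ∉ ({u₀, v₀} : Finset (Fin n)) →
                (π' w).castSucc = π w.castSucc := by
              intro w hw
              simp only [Finset.mem_insert, Finset.mem_singleton, not_or] at hw
              apply hpt_uv
              · intro h; exact hw.1 (Fin.castSucc_injective _ (h.trans hu₀.symm))
              · intro h; exact hw.2 (Fin.castSucc_injective _ (h.trans hv₀.symm))
            obtain ⟨k, hk, hsck, hscπ⟩ := hit_lemma π' π {u₀, v₀} hptK p₀ i v₀ (by simp)
              (by rw [hp₀, hi, hv₀])
            have hkv : k = v₀ := by
              rcases Finset.mem_insert.mp hk with rfl | hk2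
              · exfalso
                apply hsc
                have h1' : π.SameCycle u t := ⟨1, by rw [zpow_one, hπu]⟩
                have h1 : π.SameCycle t u := h1'.symm
                have h2 : π.SameCycle (π v) u := by
                  rw [hp₀] at hscπ
                  rwa [hu₀] at hscπ
                exact (h1.trans h2.symm).trans hsc1
              · exact Finset.mem_singleton.mp hk2
            have hsck' : π'.SameCycle p₀ v₀ := by rw [← hkv]; exact hsck
            have hstep1 : π'.SameCycle u₀ p₀ := by
              refine ⟨1, ?_⟩
              rw [zpow_one]
              apply Fin.castSucc_injective
              rw [spec_u, hp₀]
            exact hstep1.trans hsck'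
        set Rbad := R'.filter (fun x => π'.SameCycle x u₀ ∨ π'.SameCycle x v₀) with hRbad
        have hbadu : ∀ a ∈ Rbad, π'.SameCycle a u₀ := by
          intro a ha
          rw [hRbad, Finset.mem_filter] at ha
          rcases ha.2 with h | h
          · exact h
          · exact h.trans huv_sc.symm
        have hbadcard : Rbad.card ≤ 1 := by
          apply Finset.card_le_one.mpr
          intro a ha b hb
          by_contra hab
          exact hR'.2.1 a (Finset.filter_subset _ _ ha) b (Finset.filter_subset _ _ hb) hab
            ((hbadu a ha).trans (hbadu b hb).symm)
        have hsub : R' \ Rbad ⊆ R' := Finset.sdiff_subset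
        have hav : ∀ x ∈ R' \ Rbad, ∀ w, π'.SameCycle x w → w.castSucc ≠ u ∧ w.castSucc ≠ v := by
          intro x hx w hsc2
          rw [Finset.mem_sdiff, hRbad, Finset.mem_filter] at hx
          constructor
          · intro h
            have hw : w = u₀ := Fin.castSucc_injective _ (h.trans hu₀.symm)
            rw [hw] at hsc2
            exact hx.2 ⟨hx.1, Or.inl hsc2⟩
          · intro h
            have hw : w = v₀ := Fin.castSucc_injective _ (h.trans hv₀.symm)
            rw [hw] at hsc2
            exact hx.2 ⟨hx.1, Or.inr hsc2⟩
        obtain ⟨hfam, -⟩ := assembleA hpt_uv hsub hR' hav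
        refine ⟨(R' \ Rbad).map Fin.castSuccEmb, hfam, ?_⟩
        rw [Finset.card_map]
        have h1 : (R' \ Rbad).card = R'.card - Rbad.card := Finset.card_sdiff_of_subset (Finset.filter_subset _ _)
        have h2 : Rbad.card ≤ R'.card := Finset.card_le_card (Finset.filter_subset _ _)
        simp only [Finset.card_singleton] at hsupp
        omega

lemma iter_bound : ∀ (m k : ℕ) (σ τ : Equiv.Perm (Fin (k + m))),
    ∃ R : Finset (Fin (k + m)), fam m (τ * σ⁻¹) R ∧
      hd σ τ ≤ hd (contractIter m σ) (contractIter m τ) + 2 * m + R.card := by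
  intro m
  induction m with
  | zero =>
      intro k σ τ
      refine ⟨∅, ⟨fun x hx => absurd hx (Finset.notMem_empty x),
        fun x hx => absurd hx (Finset.notMem_empty x), by simp⟩, ?_⟩
      simp [contractIter]
  | succ m ih =>
      intro k σ τ
      obtain ⟨R', hfam', hle⟩ := ih k (contract σ) (contract τ)
      obtain ⟨R, hfam, hstep⟩ := step σ τ m R' hfam'
      refine ⟨R, hfam, ?_⟩
      have heq1 : contractIter (m+1) σ = contractIter m (contract σ) := rfl
      have heq2 : contractIter (m+1) τ = contractIter m (contract τ) := rfl
      rw [heq1, heq2]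
      omega

theorem hd_contractIter_ge (k m d : ℕ) (hm : 1 ≤ m) (hk : 1 ≤ k)
    (σ τ : Equiv.Perm (Fin (k + m))) (hdist : hd σ τ = d)
    (hcyc : ∀ x : Fin (k + m), ∀ L : ℕ, Odd L → 3 ≤ L → L ≤ 2 * m + 1 →
      ((τ * σ⁻¹).cycleOf x).support.card ≠ L) :
    (hd (contractIter m σ) (contractIter m τ) : ℤ) ≥ (d : ℤ) - 2 * m := by
  obtain ⟨R, hfam, hle⟩ := iter_bound m k σ τ
  have hRempty : R = ∅ := by
    by_contra hne'
    obtain ⟨x, hx⟩ := Finset.nonempty_iff_ne_empty.mpr hne'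
    obtain ⟨-, hodd, h3⟩ := hfam.1 x hx
    have hsum := hfam.2.2
    have hsingle : ((τ * σ⁻¹).cycleOf x).support.card - 1 ≤ 2 * m :=
      le_trans (Finset.single_le_sum
        (f := fun y => (((τ * σ⁻¹).cycleOf y).support.card - 1)) (fun _ _ => Nat.zero_le _) hx)
        hsum
    exact hcyc x _ hodd h3 (by omega) rfl
  rw [hRempty] at hle
  simp only [Finset.card_empty, add_zero] at hle
  rw [← hdist]
  push_cast
  omega
end
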